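/- arXiv:1101.2940 — 9 statements merged into one kernel-verified Lean document; each statement's English description precedes it below -/
import Mathlib

section
/- Let U be a finite type and let f : Finset U → ℝ be a nonnegative submodular set function. If S ⊆ U is the disjoint union of pairwise disjoint sets S_1, …, S_k, then f(S) ≥ Σ_{i=1}^{k} ( f(S) − f(S \ S_i) ), i.e., f(S) ≥ Σ_{i=1}^{k} f_{S∖S_i}(S_i). -/
/-!
Add the blocks one at a time. By submodularity, the marginal `f A - f (A \ S i)` of a block can
only shrink when `A` grows, while a newly added block `S j` has marginal exactly
`f (A ⊔ S j) - f A` with respect to the enlarged union. Inductively the marginals therefore sum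
to at most `f (⨆ i, S i) - f ⊥`, and `f ⊥ ≥ 0`.
-/

open Finset

def IsSubmodular {α : Type*} [Lattice α] (f : α → ℝ) : Prop :=
  ∀ a b, f (a ⊔ b) + f (a ⊓ b) ≤ f a + f b

namespace IsSubmodular

variable {α ι : Type*} [GeneralizedBooleanAlgebra α] {f : α → ℝ}

theorem sub_sdiff_le_sub_sdiff (hf : IsSubmodular f) {t b c : α} (htb : t ≤ b) (hbc : b ≤ c) :
    f c - f (c \ t) ≤ f b - f (b \ t) := by
  have hsup : c \ t ⊔ b = c := by
    refine le_antisymm (sup_le sdiff_le hbc) ?_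
    calc c ≤ c \ t ⊔ t := le_sdiff_sup
      _ ≤ c \ t ⊔ b := sup_le_sup_left htb _
  have hinf : c \ t ⊓ b = b \ t := by rw [sdiff_inf_right_comm, inf_eq_right.2 hbc]
  have := hf (c \ t) b
  rw [hsup, hinf] at this
  linarith

theorem sum_sub_sdiff_le (hf : IsSubmodular f) (S : ι → α) (s : Finset ι)
    (hS : (s : Set ι).PairwiseDisjoint S) :
    ∑ i ∈ s, (f (s.sup S) - f (s.sup S \ S i)) ≤ f (s.sup S) - f ⊥ := by
  classical
  induction s using Finset.induction_on with
  | empty => simp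
  | insert j s hj ih =>
    rw [coe_insert, Set.pairwiseDisjoint_insert] at hS
    set A := s.sup S
    have hAj : Disjoint A (S j) :=
      Finset.disjoint_sup_left.2 fun i hi => (hS.2 i hi (ne_of_mem_of_not_mem hi hj).symm).symm
    have hnew : (S j ⊔ A) \ S j = A := by rw [sup_sdiff_left_self, hAj.sdiff_eq_left]
    have hold : ∀ i ∈ s, f (S j ⊔ A) - f ((S j ⊔ A) \ S i) ≤ f A - f (A \ S i) := fun i hi =>
      hf.sub_sdiff_le_sub_sdiff (le_sup hi) le_sup_right
    calc ∑ i ∈ insert j s, (f ((insert j s).sup S) - f ((insert j s).sup S \ S i))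
        = (f (S j ⊔ A) - f A) + ∑ i ∈ s, (f (S j ⊔ A) - f ((S j ⊔ A) \ S i)) := by
          rw [sum_insert hj, sup_insert, hnew]
      _ ≤ (f (S j ⊔ A) - f A) + (f A - f ⊥) := by
          gcongr
          exact (sum_le_sum hold).trans (ih hS.1)
      _ = f ((insert j s).sup S) - f ⊥ := by rw [sup_insert]; ring

end IsSubmodular

theorem submodular_sum_of_marginals_le_general
    {U : Type*} [DecidableEq U] (f : Finset U → ℝ)
    (hsub : ∀ S T : Finset U, f (S ∪ T) + f (S ∩ T) ≤ f S + f T)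
    (hnonneg : ∀ S : Finset U, 0 ≤ f S)
    (k : ℕ) (S : Fin k → Finset U)
    (hdisj : ∀ i j : Fin k, i ≠ j → Disjoint (S i) (S j)) :
    ∑ i : Fin k, (f (Finset.univ.biUnion S) - f (Finset.univ.biUnion S \ S i))
      ≤ f (Finset.univ.biUnion S) := by
  have hS : ((univ : Finset (Fin k)) : Set (Fin k)).PairwiseDisjoint S :=
    fun i _ j _ hij => hdisj i j hij
  have := IsSubmodular.sum_sub_sdiff_le hsub S univ hS
  rw [sup_eq_biUnion] at this
  linarith [hnonneg ⊥]

theorem submodular_sum_of_marginals_le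
    {U : Type*} [Fintype U] [DecidableEq U] (f : Finset U → ℝ)
    (hsub : ∀ S T : Finset U, f (S ∪ T) + f (S ∩ T) ≤ f S + f T)
    (hnonneg : ∀ S : Finset U, 0 ≤ f S)
    (k : ℕ) (S : Fin k → Finset U)
    (hdisj : ∀ i j : Fin k, i ≠ j → Disjoint (S i) (S j)) :
    ∑ i : Fin k, (f (Finset.univ.biUnion S) - f (Finset.univ.biUnion S \ S i))
      ≤ f (Finset.univ.biUnion S) :=
  submodular_sum_of_marginals_le_general f hsub hnonneg k S hdisj
end

section
/- Let d ≥ 1 be a natural number, 0 < ε ≤ 1, and L_1, …, L_d > 0. Suppose for each r ∈ {1, …, d} we have real random variables X_{r,1}, …, X_{r,m} on a common probability space such that, for each fixed r, the family (X_{r,k})_{k=1}^m is independent, each X_{r,k} is almost surely nonnegative, each X_{r,k} is either almost surely constant or almost surely at most ε³·L_r, and Σ_{k=1}^m E[X_{r,k}] ≤ L_r. Then P( there exists r ∈ {1,…,d} with Σ_{k=1}^m X_{r,k} ≥ (1+ε)·L_r ) ≤ d·ε. -/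
/-!
For a single dimension `r`, every `X_{r,k}` is either a.s. constant (variance `0`) or a.s. in
`[0, ε³ L_r]`, where the Bhatia–Davis inequality gives `Var X_{r,k} ≤ ε³ L_r · E X_{r,k}`.
By independence the variance of the row sum is at most `ε³ L_r²`, and since its mean is at most
`L_r`, Chebyshev's inequality at deviation `ε L_r` bounds the probability of reaching
`(1 + ε) L_r` by `ε`. A union bound over the `d` dimensions finishes the proof.
-/

open MeasureTheory ProbabilityTheory

section

variable {Ω : Type*} [MeasurableSpace Ω] {μ : Measure Ω} [IsProbabilityMeasure μ]

lemma memLp_two_of_ae_const_or_ae_le {X : Ω → ℝ} {b : ℝ} (hX : AEStronglyMeasurable X μ)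
    (h0 : ∀ᵐ ω ∂μ, 0 ≤ X ω) (h : (∃ c : ℝ, ∀ᵐ ω ∂μ, X ω = c) ∨ ∀ᵐ ω ∂μ, X ω ≤ b) :
    MemLp X 2 μ := by
  rcases h with ⟨c, hc⟩ | hb
  · exact (memLp_const c).ae_eq (hc.mono fun _ h ↦ h.symm)
  · exact memLp_of_bounded (h0.and hb) hX 2

lemma variance_le_mul_integral_of_ae_const_or_ae_le {X : Ω → ℝ} {b : ℝ}
    (hX : AEMeasurable X μ) (h0 : ∀ᵐ ω ∂μ, 0 ≤ X ω) (hb : 0 ≤ b)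
    (h : (∃ c : ℝ, ∀ᵐ ω ∂μ, X ω = c) ∨ ∀ᵐ ω ∂μ, X ω ≤ b) :
    variance X μ ≤ b * μ[X] := by
  have hmean : 0 ≤ μ[X] := integral_nonneg_of_ae h0
  rcases h with ⟨c, hc⟩ | hle
  · rw [variance_congr (Y := fun _ ↦ c) hc, variance_eq_integral aemeasurable_const]
    simpa using mul_nonneg hb hmean
  · calc variance X μ ≤ (b - μ[X]) * (μ[X] - 0) := variance_le_sub_mul_sub (h0.and hle) hX
      _ ≤ b * μ[X] := by nlinarith

lemma measure_add_le_sum_le_of_iIndepFun {ι : Type*} [Fintype ι] {X : ι → Ω → ℝ}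
    (hindep : iIndepFun X μ) (hX : ∀ i, MemLp (X i) 2 μ) {a t : ℝ} (ht : 0 < t)
    (hmean : ∑ i, μ[X i] ≤ a) :
    μ {ω | a + t ≤ ∑ i, X i ω} ≤ ENNReal.ofReal ((∑ i, variance (X i) μ) / t ^ 2) := by
  have hsum : MemLp (∑ i, X i) 2 μ := memLp_finsetSum' _ fun i _ ↦ hX i
  have hvar : variance (∑ i, X i) μ = ∑ i, variance (X i) μ :=
    IndepFun.variance_sum (fun i _ ↦ hX i) fun i _ j _ hij ↦ hindep.indepFun hij
  have hint : ∫ ω, ∑ i, X i ω ∂μ = ∑ i, μ[X i] :=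
    integral_finsetSum _ fun i _ ↦ (hX i).integrable one_le_two
  have htail : {ω | a + t ≤ ∑ i, X i ω} ⊆ {ω | t ≤ |(∑ i, X i) ω - μ[∑ i, X i]|} := by
    intro ω hω
    simp only [Set.mem_ofPred_eq, Finset.sum_apply] at hω ⊢
    exact le_abs.mpr (Or.inl (by linarith))
  calc μ {ω | a + t ≤ ∑ i, X i ω} ≤ μ {ω | t ≤ |(∑ i, X i) ω - μ[∑ i, X i]|} :=
        measure_mono htail
    _ ≤ ENNReal.ofReal ((∑ i, variance (X i) μ) / t ^ 2) :=
        hvar ▸ meas_ge_le_variance_div_sq hsum ht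

lemma measure_one_add_mul_le_sum_le {ε L : ℝ} (hε : 0 < ε) (hL : 0 < L)
    {ι : Type*} [Fintype ι] {X : ι → Ω → ℝ} (hindep : iIndepFun X μ) (hint : ∀ k, Integrable (X k) μ)
    (hnonneg : ∀ k, ∀ᵐ ω ∂μ, 0 ≤ X k ω)
    (hbound : ∀ k, (∃ c : ℝ, ∀ᵐ ω ∂μ, X k ω = c) ∨ ∀ᵐ ω ∂μ, X k ω ≤ ε ^ 3 * L)
    (hsum : ∑ k, ∫ ω, X k ω ∂μ ≤ L) :
    μ {ω | (1 + ε) * L ≤ ∑ k, X k ω} ≤ ENNReal.ofReal ε := by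
  have hvar : ∑ k, variance (X k) μ ≤ ε ^ 3 * L * L :=
    calc ∑ k, variance (X k) μ ≤ ∑ k, ε ^ 3 * L * μ[X k] :=
          Finset.sum_le_sum fun k _ ↦ variance_le_mul_integral_of_ae_const_or_ae_le
            (hint k).aemeasurable (hnonneg k) (by positivity) (hbound k)
      _ = ε ^ 3 * L * ∑ k, μ[X k] := (Finset.mul_sum _ _ _).symm
      _ ≤ ε ^ 3 * L * L := by gcongr
  have hchebyshev := measure_add_le_sum_le_of_iIndepFun hindep
    (fun k ↦ memLp_two_of_ae_const_or_ae_le (hint k).aestronglyMeasurable (hnonneg k) (hbound k))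
    (mul_pos hε hL) hsum
  rw [show L + ε * L = (1 + ε) * L by ring] at hchebyshev
  refine hchebyshev.trans (ENNReal.ofReal_le_ofReal ?_)
  rw [div_le_iff₀ (by positivity)]
  linarith [show ε ^ 3 * L * L = ε * (ε * L) ^ 2 by ring]

end

theorem prob_not_nearly_feasible_le_general
    {Ω : Type*} [MeasurableSpace Ω] (μ : Measure Ω) [IsProbabilityMeasure μ]
    (d : ℕ) (ε : ℝ) (hε : 0 < ε)
    (L : Fin d → ℝ) (hL : ∀ r, 0 < L r)
    (m : ℕ) (X : Fin d → Fin m → Ω → ℝ)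
    (hindep : ∀ r, iIndepFun (X r) μ)
    (hint : ∀ r k, Integrable (X r k) μ)
    (hnonneg : ∀ r k, ∀ᵐ ω ∂μ, 0 ≤ X r k ω)
    (hbound : ∀ r k,
      (∃ c : ℝ, ∀ᵐ ω ∂μ, X r k ω = c) ∨ (∀ᵐ ω ∂μ, X r k ω ≤ ε ^ 3 * L r))
    (hsum : ∀ r, ∑ k : Fin m, ∫ ω, X r k ω ∂μ ≤ L r) :
    μ {ω | ∃ r : Fin d, (1 + ε) * L r ≤ ∑ k : Fin m, X r k ω}
      ≤ ENNReal.ofReal (d * ε) := by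
  calc μ {ω | ∃ r : Fin d, (1 + ε) * L r ≤ ∑ k : Fin m, X r k ω}
      = μ (⋃ r, {ω | (1 + ε) * L r ≤ ∑ k : Fin m, X r k ω}) := by rw [Set.ofPred_exists]
    _ ≤ ∑ r, μ {ω | (1 + ε) * L r ≤ ∑ k : Fin m, X r k ω} := measure_iUnion_fintype_le μ _
    _ ≤ ∑ _r : Fin d, ENNReal.ofReal ε := Finset.sum_le_sum fun r _ ↦
        measure_one_add_mul_le_sum_le hε (hL r) (hindep r) (hint r) (hnonneg r) (hbound r) (hsum r)
    _ = ENNReal.ofReal (d * ε) := by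
        simp [ENNReal.ofReal_mul (Nat.cast_nonneg d)]

theorem prob_not_nearly_feasible_le
    {Ω : Type*} [MeasurableSpace Ω] (μ : Measure Ω) [IsProbabilityMeasure μ]
    (d : ℕ) (hd : 1 ≤ d) (ε : ℝ) (hε : 0 < ε) (hε1 : ε ≤ 1)
    (L : Fin d → ℝ) (hL : ∀ r, 0 < L r)
    (m : ℕ) (X : Fin d → Fin m → Ω → ℝ)
    (hmeas : ∀ r k, Measurable (X r k))
    (hindep : ∀ r, iIndepFun (X r) μ)
    (hint : ∀ r k, Integrable (X r k) μ)
    (hnonneg : ∀ r k, ∀ᵐ ω ∂μ, 0 ≤ X r k ω)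
    (hbound : ∀ r k,
      (∃ c : ℝ, ∀ᵐ ω ∂μ, X r k ω = c) ∨ (∀ᵐ ω ∂μ, X r k ω ≤ ε ^ 3 * L r))
    (hsum : ∀ r, ∑ k : Fin m, ∫ ω, X r k ω ∂μ ≤ L r) :
    μ {ω | ∃ r : Fin d, (1 + ε) * L r ≤ ∑ k : Fin m, X r k ω}
      ≤ ENNReal.ofReal (d * ε) :=
  prob_not_nearly_feasible_le_general μ d ε hε L hL m X hindep hint hnonneg hbound hsum
end

section
/- Let d ≥ 1 and ℓ ≥ 1 be natural numbers, let U be a finite type, let c : U → ℝ^d be a cost function with c_r(i) ≥ 0 for all i and r, and let L ∈ ℝ^d with L_r > 0 for all r. Let S ⊆ U be a set such that every element i ∈ S satisfies c_r(i) ≤ L_r/2 for all r, and such that c_r(S) ≤ ℓ·L_r for all r. Then S can be partitioned into 2·d·ℓ pairwise disjoint subsets S_1, …, S_{2dℓ} (some possibly empty) whose union is S, such that each S_j is feasible, i.e., c_r(S_j) ≤ L_r for all r. -/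
/-!
Assign the elements greedily. When an element is to be placed, call a part heavy in
coordinate `r` if its load there exceeds `L r / 2`. Since the parts are disjoint, at most
`2ℓ - 1` parts are heavy in any one coordinate, so at most `d (2ℓ - 1) < 2dℓ` parts are heavy
at all; the element, of cost at most `L / 2`, goes into a part that is heavy nowhere.
-/

open Finset

theorem exists_forall_le_of_sum_le_succ_mul {ι κ : Type*} [Fintype ι] [Fintype κ]
    [DecidableEq κ] {x : ι → κ → ℝ} (hx : ∀ j r, 0 ≤ x j r) {t : κ → ℝ} {m : ℕ}
    (hcard : Fintype.card κ * m < Fintype.card ι) (hsum : ∀ r, ∑ j, x j r ≤ (m + 1) * t r) :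
    ∃ j, ∀ r, x j r ≤ t r := by
  by_contra! hheavy
  choose f hf using hheavy
  obtain ⟨r, hr⟩ := Fintype.exists_lt_card_fiber_of_mul_lt_card f hcard
  obtain ⟨F, hF, hFcard⟩ := exists_subset_card_eq hr
  have hFne : F.Nonempty := card_pos.mp (by omega)
  have : (m + 1) * t r < ∑ j, x j r :=
    calc (m + 1) * t r = ∑ _j ∈ F, t r := by simp [hFcard]
      _ < ∑ j ∈ F, x j r := sum_lt_sum_of_nonempty hFne fun j hj => by
        simpa [(mem_filter.mp (hF hj)).2] using hf j
      _ ≤ ∑ j, x j r := sum_le_univ_sum_of_nonneg fun j => hx j r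
  exact (hsum r).not_gt this

theorem exists_assignment_sum_fiber_le {U ι κ : Type*} [DecidableEq U] [Fintype ι] [DecidableEq ι]
    [Fintype κ] [DecidableEq κ] {m : ℕ} (hcard : Fintype.card κ * m < Fintype.card ι)
    {c : U → κ → ℝ} (hc : ∀ i r, 0 ≤ c i r) {L : κ → ℝ} (hL : ∀ r, 0 ≤ L r) (S : Finset U)
    (hsmall : ∀ i ∈ S, ∀ r, c i r ≤ L r / 2)
    (htotal : ∀ r, ∑ i ∈ S, c i r ≤ (m + 1) * (L r / 2)) :
    ∃ g : U → ι, ∀ j r, ∑ i ∈ S with g i = j, c i r ≤ L r := by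
  induction S using Finset.induction_on with
  | empty =>
    have : Nonempty ι := Fintype.card_pos_iff.mp (by omega)
    exact ⟨fun _ => Classical.arbitrary ι, fun j r => by simpa using hL r⟩
  | @insert a s ha ih =>
    have hs_total : ∀ r, ∑ i ∈ s, c i r ≤ (m + 1) * (L r / 2) := fun r =>
      (sum_le_sum_of_subset_of_nonneg (subset_insert a s) fun i _ _ => hc i r).trans (htotal r)
    obtain ⟨g, hg⟩ := ih (fun i hi => hsmall i (mem_insert_of_mem hi)) hs_total
    obtain ⟨j₀, hj₀⟩ := exists_forall_le_of_sum_le_succ_mul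
      (x := fun j r => ∑ i ∈ s with g i = j, c i r) (t := fun r => L r / 2)
      (fun j r => sum_nonneg fun i _ => hc i r) hcard fun r => by
        simpa only [sum_fiberwise] using hs_total r
    refine ⟨Function.update g a j₀, fun j r => ?_⟩
    have hfiber : ∀ j, s.filter (fun i => Function.update g a j₀ i = j) = s.filter (g · = j) :=
      fun j => filter_congr fun i hi => by rw [Function.update_of_ne (ne_of_mem_of_not_mem hi ha)]
    rw [filter_insert, hfiber, Function.update_self]
    split_ifs with hj
    · subst hj
      rw [sum_insert (fun h => ha (mem_filter.mp h).1)]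
      linarith [hsmall a (mem_insert_self a s) r, hj₀ r]
    · exact hg j r

theorem partition_into_feasible_sets_general
    {U : Type*} [DecidableEq U]
    (d ℓ : ℕ) (hd : 1 ≤ d) (hℓ : 1 ≤ ℓ)
    (c : U → Fin d → ℝ) (hc : ∀ i r, 0 ≤ c i r)
    (L : Fin d → ℝ) (hL : ∀ r, 0 < L r)
    (S : Finset U)
    (hsmall : ∀ i ∈ S, ∀ r, c i r ≤ L r / 2)
    (htotal : ∀ r, ∑ i ∈ S, c i r ≤ ℓ * L r) :
    ∃ P : Fin (2 * d * ℓ) → Finset U,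
      (∀ j j' : Fin (2 * d * ℓ), j ≠ j' → Disjoint (P j) (P j')) ∧
      Finset.univ.biUnion P = S ∧
      (∀ j r, ∑ i ∈ P j, c i r ≤ L r) := by
  have hcard : Fintype.card (Fin d) * (2 * ℓ - 1) < Fintype.card (Fin (2 * d * ℓ)) := by
    rw [Fintype.card_fin, Fintype.card_fin, Nat.mul_sub_one, mul_left_comm, ← mul_assoc]
    exact Nat.sub_lt (by positivity) hd
  have htotal' : ∀ r, ∑ i ∈ S, c i r ≤ ((2 * ℓ - 1 : ℕ) + 1) * (L r / 2) := fun r => by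
    rw [Nat.cast_sub (by omega)]
    push_cast
    linarith [htotal r]
  obtain ⟨g, hg⟩ := exists_assignment_sum_fiber_le hcard hc (fun r => (hL r).le) S hsmall htotal'
  refine ⟨fun j => S.filter (g · = j), fun j j' hne => ?_, ?_, hg⟩
  · exact disjoint_filter.2 fun i _ hj hj' => hne (hj.symm.trans hj')
  · exact biUnion_filter_eq_of_maps_to fun i _ => mem_univ (g i)

theorem partition_into_feasible_sets
    {U : Type*} [Fintype U] [DecidableEq U]
    (d ℓ : ℕ) (hd : 1 ≤ d) (hℓ : 1 ≤ ℓ)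
    (c : U → Fin d → ℝ) (hc : ∀ i r, 0 ≤ c i r)
    (L : Fin d → ℝ) (hL : ∀ r, 0 < L r)
    (S : Finset U)
    (hsmall : ∀ i ∈ S, ∀ r, c i r ≤ L r / 2)
    (htotal : ∀ r, ∑ i ∈ S, c i r ≤ ℓ * L r) :
    ∃ P : Fin (2 * d * ℓ) → Finset U,
      (∀ j j' : Fin (2 * d * ℓ), j ≠ j' → Disjoint (P j) (P j')) ∧
      Finset.univ.biUnion P = S ∧
      (∀ j r, ∑ i ∈ P j, c i r ≤ L r) :=
  partition_into_feasible_sets_general d ℓ hd hℓ c hc L hL S hsmall htotal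
end

section
/- Let d ≥ 1 and ℓ ≥ 1 be natural numbers, let U be a finite type, let f : Finset U → ℝ be a nonnegative submodular set function with f(∅) ≥ 0, let c : U → ℝ^d be a cost function with c_r(i) ≥ 0 for all i and r, and let L ∈ ℝ^d with L_r > 0 for all r. Let 𝒪 denote the maximum of f(T) over all feasible T ⊆ U. If S ⊆ U satisfies c_r(i) ≤ L_r/2 for every i ∈ S and every r, and c_r(S) ≤ ℓ·L_r for all r, then f(S) ≤ 2·d·ℓ·𝒪. -/
/-!
Measure the load of a set by the potential `Φ(T) = ∑_r c_r(T) / (L_r / 2)`, so that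
`Φ(S) ≤ 2 d ℓ`. If `S` is infeasible, a maximal feasible subset `T ⊆ S` must be blocked in some
dimension `r` by an element of cost at most `L_r / 2`, hence `c_r(T) > L_r / 2` and `Φ(T) > 1`.
Splitting `f(S) ≤ f(T) + f(S \ T)` by submodularity and inducting on `⌈Φ⌉` gives
`f(S) ≤ k 𝒪` whenever `Φ(S) ≤ k`.
-/

open Finset

theorem Finset.exists_subset_maximal {α : Type*} [DecidableEq α] (P : Finset α → Prop)
    (hP : P ∅) (S : Finset α) :
    ∃ T ⊆ S, P T ∧ ∀ i ∈ S \ T, ¬ P (insert i T) := by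
  classical
  obtain ⟨T, hTmem, hTmax⟩ :=
    (S.powerset.filter P).exists_maximal ⟨∅, by simpa using hP⟩
  simp only [mem_filter, mem_powerset] at hTmem
  refine ⟨T, hTmem.1, hTmem.2, fun i hi hPi => (mem_sdiff.1 hi).2 ?_⟩
  have hle : insert i T ≤ T :=
    hTmax (by simpa using ⟨insert_subset (mem_sdiff.1 hi).1 hTmem.1, hPi⟩) (subset_insert i T)
  exact hle (mem_insert_self i T)

theorem le_add_sdiff_of_submodular {U : Type*} [DecidableEq U] {f : Finset U → ℝ}
    (hsub : ∀ S T : Finset U, f (S ∪ T) + f (S ∩ T) ≤ f S + f T) (hempty : 0 ≤ f ∅)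
    {S T : Finset U} (hTS : T ⊆ S) :
    f S ≤ f T + f (S \ T) := by
  have h := hsub T (S \ T)
  rw [union_sdiff_of_subset hTS, inter_sdiff_self] at h
  linarith

namespace Knapsack

variable {U ι : Type*} {c : U → ι → ℝ} {L : ι → ℝ}

variable (c L) in
def IsFeasible (T : Finset U) : Prop := ∀ r, ∑ i ∈ T, c i r ≤ L r

theorem isFeasible_empty (hL : ∀ r, 0 < L r) : IsFeasible c L ∅ :=
  fun r => by simpa using (hL r).le

variable [Fintype ι]

variable (c L) in
noncomputable def potential (T : Finset U) : ℝ := ∑ r, 2 * (∑ i ∈ T, c i r) / L r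

theorem potential_sdiff [DecidableEq U] {S T : Finset U} (hTS : T ⊆ S) :
    potential c L (S \ T) = potential c L S - potential c L T := by
  simp only [potential, ← sum_sub_distrib, sum_sdiff_eq_sub hTS]
  congr 1; ext r; ring

theorem potential_term_le (hc : ∀ i r, 0 ≤ c i r) (hL : ∀ r, 0 < L r) (T : Finset U) (r : ι) :
    2 * (∑ i ∈ T, c i r) / L r ≤ potential c L T :=
  single_le_sum (f := fun r => 2 * (∑ i ∈ T, c i r) / L r)
    (fun r _ => div_nonneg (mul_nonneg zero_le_two (sum_nonneg fun i _ => hc i r)) (hL r).le)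
    (mem_univ r)

theorem isFeasible_of_potential_le_one (hc : ∀ i r, 0 ≤ c i r) (hL : ∀ r, 0 < L r)
    {T : Finset U} (hT : potential c L T ≤ 1) : IsFeasible c L T := fun r => by
  have h := (potential_term_le hc hL T r).trans hT
  rw [div_le_one (hL r)] at h
  linarith [hL r, sum_nonneg fun i (_ : i ∈ T) => hc i r]

theorem one_lt_potential (hc : ∀ i r, 0 ≤ c i r) (hL : ∀ r, 0 < L r) {T : Finset U} {r : ι}
    (hT : L r / 2 < ∑ i ∈ T, c i r) : 1 < potential c L T := by
  refine lt_of_lt_of_le ?_ (potential_term_le hc hL T r)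
  rw [one_lt_div (hL r)]
  linarith

theorem potential_le_of_sum_le (hL : ∀ r, 0 < L r) {T : Finset U} {ℓ : ℝ}
    (hT : ∀ r, ∑ i ∈ T, c i r ≤ ℓ * L r) :
    potential c L T ≤ 2 * Fintype.card ι * ℓ := by
  calc potential c L T ≤ ∑ _r : ι, 2 * ℓ :=
        sum_le_sum fun r _ => by
          rw [div_le_iff₀ (hL r)]
          linarith [hT r]
    _ = 2 * Fintype.card ι * ℓ := by simp [card_univ]; ring

theorem exists_isFeasible_one_lt_potential [DecidableEq U] (hc : ∀ i r, 0 ≤ c i r)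
    (hL : ∀ r, 0 < L r) {S : Finset U} (hsmall : ∀ i ∈ S, ∀ r, c i r ≤ L r / 2)
    (hS : ¬ IsFeasible c L S) :
    ∃ T ⊆ S, IsFeasible c L T ∧ 1 < potential c L T := by
  obtain ⟨T, hTS, hT, hTmax⟩ := exists_subset_maximal (IsFeasible c L) (isFeasible_empty hL) S
  obtain ⟨i, hiS, hiT⟩ := exists_of_ssubset (hTS.ssubset_of_ne (by rintro rfl; exact hS hT))
  have hblocked := hTmax i (mem_sdiff.2 ⟨hiS, hiT⟩)
  simp only [IsFeasible, not_forall, not_le, sum_insert hiT] at hblocked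
  obtain ⟨r, hr⟩ := hblocked
  exact ⟨T, hTS, hT, one_lt_potential hc hL (r := r) (by linarith [hsmall i hiS r])⟩

theorem le_mul_of_potential_le [DecidableEq U] {f : Finset U → ℝ}
    (hsub : ∀ S T : Finset U, f (S ∪ T) + f (S ∩ T) ≤ f S + f T) (hempty : 0 ≤ f ∅)
    (hc : ∀ i r, 0 ≤ c i r) (hL : ∀ r, 0 < L r) {O : ℝ}
    (hO : ∀ T, IsFeasible c L T → f T ≤ O) {k : ℕ} (hk : 1 ≤ k) :
    ∀ S : Finset U, (∀ i ∈ S, ∀ r, c i r ≤ L r / 2) → potential c L S ≤ k → f S ≤ k * O := by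
  have hO₀ : 0 ≤ O := hempty.trans (hO ∅ (isFeasible_empty hL))
  induction k, hk using Nat.le_induction with
  | base =>
    intro S _ hS
    simpa using hO S (isFeasible_of_potential_le_one hc hL (by exact_mod_cast hS))
  | succ k hk ih =>
    intro S hsmall hS
    by_cases hfeas : IsFeasible c L S
    · have : (1 : ℝ) ≤ (k + 1 : ℕ) := by exact_mod_cast Nat.le_add_left 1 k
      nlinarith [hO S hfeas]
    obtain ⟨T, hTS, hT, hΦT⟩ := exists_isFeasible_one_lt_potential hc hL hsmall hfeas
    have hrest : f (S \ T) ≤ k * O :=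
      ih (S \ T) (fun i hi => hsmall i (mem_sdiff.1 hi).1) (by
        rw [potential_sdiff hTS]
        push_cast at hS
        linarith)
    calc f S ≤ f T + f (S \ T) := le_add_sdiff_of_submodular hsub hempty hTS
      _ ≤ O + k * O := add_le_add (hO T hT) hrest
      _ = (k + 1 : ℕ) * O := by push_cast; ring

end Knapsack

open Knapsack in
theorem submodular_value_le_of_bounded_cost_general
    {U : Type*} [Fintype U] [DecidableEq U]
    (d ℓ : ℕ) (hd : 1 ≤ d) (hℓ : 1 ≤ ℓ)
    (f : Finset U → ℝ)
    (hsub : ∀ S T : Finset U, f (S ∪ T) + f (S ∩ T) ≤ f S + f T)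
    (hempty : 0 ≤ f ∅)
    (c : U → Fin d → ℝ) (hc : ∀ i r, 0 ≤ c i r)
    (L : Fin d → ℝ) (hL : ∀ r, 0 < L r)
    (O : ℝ)
    (hO : IsGreatest
      {y : ℝ | ∃ T : Finset U, (∀ r, ∑ i ∈ T, c i r ≤ L r) ∧ f T = y} O)
    (S : Finset U)
    (hsmall : ∀ i ∈ S, ∀ r, c i r ≤ L r / 2)
    (htotal : ∀ r, ∑ i ∈ S, c i r ≤ ℓ * L r) :
    f S ≤ 2 * (d : ℝ) * (ℓ : ℝ) * O := by
  have hk : 1 ≤ 2 * d * ℓ := by nlinarith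
  have hΦ : potential c L S ≤ (2 * d * ℓ : ℕ) := by
    simpa using potential_le_of_sum_le hL htotal
  simpa using le_mul_of_potential_le hsub hempty hc hL (fun T hT => hO.2 ⟨T, hT, rfl⟩) hk S
    hsmall hΦ

theorem submodular_value_le_of_bounded_cost
    {U : Type*} [Fintype U] [DecidableEq U]
    (d ℓ : ℕ) (hd : 1 ≤ d) (hℓ : 1 ≤ ℓ)
    (f : Finset U → ℝ)
    (hsub : ∀ S T : Finset U, f (S ∪ T) + f (S ∩ T) ≤ f S + f T)
    (hnonneg : ∀ S : Finset U, 0 ≤ f S)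
    (hempty : 0 ≤ f ∅)
    (c : U → Fin d → ℝ) (hc : ∀ i r, 0 ≤ c i r)
    (L : Fin d → ℝ) (hL : ∀ r, 0 < L r)
    (O : ℝ)
    (hO : IsGreatest
      {y : ℝ | ∃ T : Finset U, (∀ r, ∑ i ∈ T, c i r ≤ L r) ∧ f T = y} O)
    (S : Finset U)
    (hsmall : ∀ i ∈ S, ∀ r, c i r ≤ L r / 2)
    (htotal : ∀ r, ∑ i ∈ S, c i r ≤ ℓ * L r) :
    f S ≤ 2 * (d : ℝ) * (ℓ : ℝ) * O :=
  submodular_value_le_of_bounded_cost_general d ℓ hd hℓ f hsub hempty c hc L hL O hO S hsmall htotal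
end

section
/- For every natural number d ≥ 1 there exists a constant C > 0 (depending only on d) such that the following holds. Let U be a finite type, let f : Finset U → ℝ be a nonnegative submodular set function with f(∅) = 0, let c : U → ℝ^d with c_r(i) ≥ 0, let L ∈ ℝ^d with L_r > 0, and let 0 < ε < 1. Assume every element of U is small, i.e., c_r(i) ≤ ε³·L_r for all i ∈ U and all r. Let 𝒪 = max { f(T) : T ⊆ U feasible }. Let x ∈ [0,1]^U satisfy Σ_{i∈U} x_i·c_r(i) ≤ L_r for all r, and assume E[f(D)] ≥ 𝒪/5, where D ⊆ U is a random set in which each element i is included independently with probability x_i. Then E[ f(D) · 1{D is ε-nearly feasible} ] ≥ (1 − C·ε) · E[f(D)]. -/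
open scoped Classical

/-- The extension by expectation (multilinear extension) of a set function. -/
noncomputable def mulExt {U : Type*} [Fintype U] [DecidableEq U]
    (f : Finset U → ℝ) (y : U → ℝ) : ℝ :=
  ∑ R : Finset U, f R * ((∏ i ∈ R, y i) * ∏ i ∈ Rᶜ, (1 - y i))

/-!
A nonnegative submodular `f` is subadditive. Splitting a set `S` into a minimal infeasible
chunk (value at most `2O`, relative load at least `1`) and the rest gives, by induction,
`f(S) ≤ O (1 + 2 ∑_r c_r(S) / L_r)`. If a realization is not `ε`-nearly feasible, some relative
load `Y_r` exceeds `θ = 1 + ε`, and then this bound is at most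
`O (1 + 2dθ) ∑_r exp(λ (Y_r - θ))` with `λ = 1 / (2ε²)`: that sum is at least `1`, and each
`Y_s ≥ θ` satisfies `Y_s ≤ θ exp(λ (Y_s - θ))` because `λθ ≥ 1`. As every item has relative
cost at most `ε³` and every expected load is at most `1`, Chernoff's moment bound gives
`E[exp(λ (Y_r - θ))] ≤ exp(-1 / (4ε)) ≤ 4ε`. So the infeasible realizations contribute
`O(d² ε O)`, which is `O(d² ε F(x))` because `O ≤ 5 F(x)`.
-/

open Finset Real

section BernoulliExpect

variable {U : Type*} [Fintype U] [DecidableEq U]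

noncomputable def bernoulliWeight (x : U → ℝ) (R : Finset U) : ℝ :=
  (∏ i ∈ R, x i) * ∏ i ∈ Rᶜ, (1 - x i)

/-- `E[g(D)]` for `D ~ x`; definitionally `mulExt f x = bernoulliExpect x f`. -/
noncomputable def bernoulliExpect (x : U → ℝ) (g : Finset U → ℝ) : ℝ :=
  ∑ R, g R * bernoulliWeight x R

variable {x : U → ℝ}

lemma bernoulliWeight_nonneg (hx : ∀ i, 0 ≤ x i ∧ x i ≤ 1) (R : Finset U) :
    0 ≤ bernoulliWeight x R :=
  mul_nonneg (prod_nonneg fun i _ ↦ (hx i).1) (prod_nonneg fun i _ ↦ sub_nonneg.2 (hx i).2)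

lemma bernoulliExpect_mono (hx : ∀ i, 0 ≤ x i ∧ x i ≤ 1) {g h : Finset U → ℝ}
    (hgh : ∀ R, g R ≤ h R) : bernoulliExpect x g ≤ bernoulliExpect x h :=
  sum_le_sum fun R _ ↦ mul_le_mul_of_nonneg_right (hgh R) (bernoulliWeight_nonneg hx R)

lemma bernoulliExpect_add (g h : Finset U → ℝ) :
    bernoulliExpect x (g + h) = bernoulliExpect x g + bernoulliExpect x h := by
  simp only [bernoulliExpect, Pi.add_apply, add_mul, sum_add_distrib]

lemma bernoulliExpect_eq_add_ite (P : Finset U → Prop) [DecidablePred P] (g : Finset U → ℝ) :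
    bernoulliExpect x g = bernoulliExpect x (fun R ↦ if P R then g R else 0) +
      bernoulliExpect x (fun R ↦ if P R then 0 else g R) := by
  rw [← bernoulliExpect_add]
  congr 1
  ext R
  simp only [Pi.add_apply]
  split_ifs <;> simp

lemma bernoulliExpect_const_mul_sum {ι : Type*} (s : Finset ι) (a : ℝ) (g : ι → Finset U → ℝ) :
    bernoulliExpect x (fun R ↦ a * ∑ r ∈ s, g r R) = a * ∑ r ∈ s, bernoulliExpect x (g r) := by
  simp only [bernoulliExpect, mul_sum, sum_mul]
  rw [sum_comm]
  simp only [mul_assoc]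

lemma bernoulliExpect_exp_sum (a : U → ℝ) :
    bernoulliExpect x (fun R ↦ exp (∑ i ∈ R, a i)) = ∏ i, (x i * exp (a i) + (1 - x i)) := by
  simp only [bernoulliExpect, bernoulliWeight, Fintype.prod_add, prod_mul_distrib, exp_sum]
  exact sum_congr rfl fun R _ ↦ by ring

end BernoulliExpect

lemma exp_mul_le_one_add_mul_exp_sub_one {a β : ℝ} (t : ℝ) (ha : 0 ≤ a) (haβ : a ≤ β)
    (hβ : 0 < β) : exp (t * a) ≤ 1 + a / β * (exp (t * β) - 1) := by
  have h := convexOn_exp.2 (Set.mem_univ 0) (Set.mem_univ (t * β))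
    (sub_nonneg.2 ((div_le_one hβ).2 haβ)) (div_nonneg ha hβ.le) (sub_add_cancel 1 (a / β))
  simp only [smul_eq_mul, mul_zero, zero_add, exp_zero, mul_one] at h
  rw [show a / β * (t * β) = t * a by field_simp] at h
  linarith

lemma mul_exp_add_one_sub_le {p a β : ℝ} (t : ℝ) (hp : 0 ≤ p) (ha : 0 ≤ a) (haβ : a ≤ β)
    (hβ : 0 < β) : p * exp (t * a) + (1 - p) ≤ exp (p * a * ((exp (t * β) - 1) / β)) :=
  calc p * exp (t * a) + (1 - p) ≤ p * (1 + a / β * (exp (t * β) - 1)) + (1 - p) := by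
        gcongr; exact exp_mul_le_one_add_mul_exp_sub_one t ha haβ hβ
    _ = p * a * ((exp (t * β) - 1) / β) + 1 := by ring
    _ ≤ _ := add_one_le_exp _

lemma bernoulliExpect_exp_mul_sum_sub_le {U : Type*} [Fintype U] [DecidableEq U]
    {x a : U → ℝ} {t β μ : ℝ} (θ : ℝ) (hx : ∀ i, 0 ≤ x i ∧ x i ≤ 1)
    (ha : ∀ i, 0 ≤ a i ∧ a i ≤ β) (hβ : 0 < β) (hμ : ∑ i, x i * a i ≤ μ) (ht : 0 ≤ t) :
    bernoulliExpect x (fun R ↦ exp (t * (∑ i ∈ R, a i - θ))) ≤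
      exp (μ * ((exp (t * β) - 1) / β) - t * θ) := by
  have hK : 0 ≤ (exp (t * β) - 1) / β :=
    div_nonneg (sub_nonneg.2 (one_le_exp (mul_nonneg ht hβ.le))) hβ.le
  have hmgf : ∏ i, (x i * exp (t * a i) + (1 - x i)) ≤ exp (μ * ((exp (t * β) - 1) / β)) :=
    calc ∏ i, (x i * exp (t * a i) + (1 - x i))
        ≤ ∏ i, exp (x i * a i * ((exp (t * β) - 1) / β)) :=
          prod_le_prod (fun i _ ↦ add_nonneg (mul_nonneg (hx i).1 (exp_pos _).le)
            (sub_nonneg.2 (hx i).2))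
            fun i _ ↦ mul_exp_add_one_sub_le t (hx i).1 (ha i).1 (ha i).2 hβ
      _ = exp ((∑ i, x i * a i) * ((exp (t * β) - 1) / β)) := by rw [← exp_sum, sum_mul]
      _ ≤ _ := exp_le_exp.2 (mul_le_mul_of_nonneg_right hμ hK)
  have hsplit : ∀ R : Finset U, exp (t * (∑ i ∈ R, a i - θ)) =
      exp (-(t * θ)) * exp (∑ i ∈ R, t * a i) := fun R ↦ by
    rw [← exp_add, ← mul_sum]; ring_nf
  calc bernoulliExpect x (fun R ↦ exp (t * (∑ i ∈ R, a i - θ)))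
      = exp (-(t * θ)) * ∏ i, (x i * exp (t * a i) + (1 - x i)) := by
        simp only [hsplit, ← bernoulliExpect_exp_sum]
        simp only [bernoulliExpect, mul_sum, mul_assoc]
    _ ≤ exp (-(t * θ)) * exp (μ * ((exp (t * β) - 1) / β)) := by gcongr
    _ = _ := by rw [← exp_add]; ring_nf

lemma bernoulliExpect_exp_overshoot_le {U : Type*} [Fintype U] [DecidableEq U]
    {x a : U → ℝ} {ε : ℝ} (hx : ∀ i, 0 ≤ x i ∧ x i ≤ 1) (hε : 0 < ε) (hε2 : ε ≤ 2)
    (ha : ∀ i, 0 ≤ a i ∧ a i ≤ ε ^ 3) (hμ : ∑ i, x i * a i ≤ 1) :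
    bernoulliExpect x (fun R ↦ exp (1 / (2 * ε ^ 2) * (∑ i ∈ R, a i - (1 + ε)))) ≤ 4 * ε := by
  refine (bernoulliExpect_exp_mul_sum_sub_le _ hx ha (by positivity) hμ (by positivity)).trans ?_
  have htβ : 1 / (2 * ε ^ 2) * ε ^ 3 = ε / 2 := by field_simp
  have hquad : exp (ε / 2) - 1 ≤ ε / 2 + (ε / 2) ^ 2 := by
    have h := abs_exp_sub_one_sub_id_le (x := ε / 2) (by rw [abs_le]; constructor <;> linarith)
    linarith [le_abs_self (exp (ε / 2) - 1 - ε / 2)]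
  have hexponent :
      1 * ((exp (ε / 2) - 1) / ε ^ 3) - 1 / (2 * ε ^ 2) * (1 + ε) ≤ -(1 / (4 * ε)) := by
    have : (exp (ε / 2) - 1) / ε ^ 3 ≤ (ε / 2 + (ε / 2) ^ 2) / ε ^ 3 := by gcongr
    have e : (ε / 2 + (ε / 2) ^ 2) / ε ^ 3 - 1 / (2 * ε ^ 2) * (1 + ε) = -(1 / (4 * ε)) := by
      field_simp; ring
    linarith
  have hdecay := (mul_exp_neg_le_exp_neg_one (1 / (4 * ε))).trans
    (exp_le_one_iff.2 (by norm_num : (-1 : ℝ) ≤ 0))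
  rw [one_div, inv_mul_le_iff₀ (by positivity), mul_one] at hdecay
  rw [htβ]
  exact (exp_le_exp.2 hexponent).trans (by rwa [one_div])

lemma le_mul_one_add_two_mul_sum_of_subadditive {U : Type*} [DecidableEq U]
    {f : Finset U → ℝ} {p : Finset U → Prop} [DecidablePred p] {w : U → ℝ} {O : ℝ}
    (hf : ∀ A B, f (A ∪ B) ≤ f A + f B) (hw : ∀ i, 0 ≤ w i) (hO : 0 ≤ O) (hp : p ∅)
    (hfp : ∀ T, p T → f T ≤ O) (hf_singleton : ∀ i, f {i} ≤ O)
    (hweight : ∀ T, ¬ p T → 1 ≤ ∑ i ∈ T, w i) (S : Finset U) :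
    f S ≤ O * (1 + 2 * ∑ i ∈ S, w i) := by
  induction S using Finset.strongInduction with | H S ih =>
  by_cases hS : p S
  · nlinarith [hfp S hS, sum_nonneg fun i (_ : i ∈ S) ↦ hw i]
  -- Split off a minimal infeasible set `Q = P ∪ {e}` built from a largest feasible `P ⊆ S`.
  obtain ⟨P, hP, hPmax⟩ := exists_max_image (S.powerset.filter p) card ⟨∅, by simp [hp]⟩
  rw [mem_filter, mem_powerset] at hP
  obtain ⟨e, heS, heP⟩ :=
    exists_of_ssubset (ssubset_of_subset_of_ne hP.1 (by rintro rfl; exact hS hP.2))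
  set Q := insert e P
  have hQS : Q ⊆ S := insert_subset heS hP.1
  have hQ : ¬ p Q := fun hQ ↦ by
    have := hPmax Q (by simp [hQS, hQ])
    rw [card_insert_of_notMem heP] at this
    omega
  have hfQ : f Q ≤ 2 * O := by
    have := hf {e} P
    rw [← insert_eq] at this
    linarith [hf_singleton e, hfp P hP.2]
  have hfS : f S ≤ f Q + f (S \ Q) := by
    simpa [union_sdiff_of_subset hQS] using hf Q (S \ Q)
  have hwS : ∑ i ∈ S, w i = ∑ i ∈ S \ Q, w i + ∑ i ∈ Q, w i := (sum_sdiff hQS).symm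
  have hrest := ih (S \ Q) (sdiff_ssubset hQS ⟨e, mem_insert_self e P⟩)
  nlinarith [hweight Q hQ]

lemma le_mul_exp_mul_sub {y θ t : ℝ} (hθ : 0 ≤ θ) (htθ : 1 ≤ t * θ) (hy : θ ≤ y) :
    y ≤ θ * exp (t * (y - θ)) := by
  nlinarith [mul_le_mul_of_nonneg_left (add_one_le_exp (t * (y - θ))) hθ]

lemma ite_le_mul_sum_exp {ι : Type*} [Fintype ι] {Y : ι → ℝ} {θ t O v : ℝ} (hθ : 0 ≤ θ)
    (htθ : 1 ≤ t * θ) (hO : 0 ≤ O) (hv : v ≤ O * (1 + 2 * ∑ r, Y r)) :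
    (if ∀ r, Y r ≤ θ then 0 else v) ≤
      O * (1 + 2 * Fintype.card ι * θ) * ∑ r, exp (t * (Y r - θ)) := by
  have ht : 0 ≤ t := by
    by_contra! h; nlinarith
  set E := ∑ r, exp (t * (Y r - θ))
  have hE_ge : ∀ r, exp (t * (Y r - θ)) ≤ E := fun r ↦
    single_le_sum (f := fun r ↦ exp (t * (Y r - θ))) (fun r _ ↦ (exp_pos _).le) (mem_univ r)
  split_ifs with hfeas
  · positivity
  obtain ⟨r₀, hr₀⟩ := not_forall.1 hfeas
  have hE : 1 ≤ E := (one_le_exp (mul_nonneg ht (sub_nonneg.2 (not_le.1 hr₀).le))).trans (hE_ge r₀)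
  have hY : ∀ s, Y s ≤ θ * E := fun s ↦ by
    rcases le_or_gt (Y s) θ with hs | hs
    · nlinarith
    · exact (le_mul_exp_mul_sub hθ htθ hs.le).trans
        (mul_le_mul_of_nonneg_left (hE_ge s) hθ)
  have hsum : ∑ s, Y s ≤ Fintype.card ι * (θ * E) := by
    simpa using sum_le_sum fun s (_ : s ∈ univ) ↦ hY s
  calc v ≤ O * (1 + 2 * ∑ r, Y r) := hv
    _ ≤ O * (E + 2 * (Fintype.card ι * (θ * E))) := by gcongr
    _ = _ := by ring

lemma sum_div_le_iff {U ι : Type*} {c : U → ι → ℝ} {L : ι → ℝ} {r : ι} (hL : 0 < L r)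
    (T : Finset U) (κ : ℝ) : ∑ i ∈ T, c i r / L r ≤ κ ↔ ∑ i ∈ T, c i r ≤ κ * L r := by
  rw [← sum_div, div_le_iff₀ hL]

lemma le_mul_one_add_two_mul_sum_sum_div {U ι : Type*} [DecidableEq U] [Fintype ι]
    {f : Finset U → ℝ} (hsub : ∀ S T : Finset U, f (S ∪ T) + f (S ∩ T) ≤ f S + f T)
    (hnn : ∀ S, 0 ≤ f S) {c : U → ι → ℝ} (hc : ∀ i r, 0 ≤ c i r) {L : ι → ℝ}
    (hL : ∀ r, 0 < L r) (hitem : ∀ i r, c i r ≤ L r) {O : ℝ}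
    (hO : ∀ T, (∀ r, ∑ i ∈ T, c i r ≤ L r) → f T ≤ O) (S : Finset U) :
    f S ≤ O * (1 + 2 * ∑ r, ∑ i ∈ S, c i r / L r) := by
  have hweight : ∀ T : Finset U, ¬ (∀ r, ∑ i ∈ T, c i r ≤ L r) →
      1 ≤ ∑ i ∈ T, ∑ r, c i r / L r := fun T hT ↦ by
    obtain ⟨r, hr⟩ := not_forall.1 hT
    have hr' : 1 < ∑ i ∈ T, c i r / L r := by
      by_contra! h
      exact hr (by simpa using (sum_div_le_iff (hL r) T 1).1 h)
    rw [sum_comm]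
    exact hr'.le.trans (single_le_sum (f := fun r ↦ ∑ i ∈ T, c i r / L r)
      (fun r _ ↦ sum_nonneg fun i _ ↦ div_nonneg (hc i r) (hL r).le) (mem_univ r))
  have h := le_mul_one_add_two_mul_sum_of_subadditive (p := fun T ↦ ∀ r, ∑ i ∈ T, c i r ≤ L r)
    (fun A B ↦ by linarith [hsub A B, hnn (A ∩ B)])
    (fun i ↦ sum_nonneg fun r _ ↦ div_nonneg (hc i r) (hL r).le)
    ((hnn ∅).trans (hO ∅ fun r ↦ by simp [(hL r).le]))
    (fun r ↦ by simp [(hL r).le]) hO (fun i ↦ hO {i} fun r ↦ by simpa using hitem i r) hweight S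
  rwa [sum_comm] at h

lemma bernoulliExpect_not_nearlyFeasible_le {U ι : Type*} [Fintype U] [DecidableEq U] [Fintype ι]
    {f : Finset U → ℝ} (hsub : ∀ S T : Finset U, f (S ∪ T) + f (S ∩ T) ≤ f S + f T)
    (hnn : ∀ S, 0 ≤ f S) {c : U → ι → ℝ} (hc : ∀ i r, 0 ≤ c i r) {L : ι → ℝ}
    (hL : ∀ r, 0 < L r) {ε : ℝ} (hε : 0 < ε) (hε1 : ε < 1) (hsmall : ∀ i r, c i r ≤ ε ^ 3 * L r)
    {O : ℝ} (hO : ∀ T, (∀ r, ∑ i ∈ T, c i r ≤ L r) → f T ≤ O) {x : U → ℝ}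
    (hx : ∀ i, 0 ≤ x i ∧ x i ≤ 1) (hbudget : ∀ r, ∑ i, x i * c i r ≤ L r)
    [DecidablePred fun R : Finset U ↦ ∀ r, ∑ i ∈ R, c i r ≤ (1 + ε) * L r] :
    bernoulliExpect x (fun R ↦ if ∀ r, ∑ i ∈ R, c i r ≤ (1 + ε) * L r then 0 else f R) ≤
      O * ((1 + 2 * Fintype.card ι * (1 + ε)) * (Fintype.card ι * (4 * ε))) := by
  set t := 1 / (2 * ε ^ 2) with ht
  have htθ : 1 ≤ t * (1 + ε) := by
    rw [ht, div_mul_eq_mul_div, one_mul, le_div_iff₀ (by positivity)]; nlinarith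
  have hO0 : 0 ≤ O := (hnn ∅).trans (hO ∅ fun r ↦ by simp [(hL r).le])
  have hvalue := le_mul_one_add_two_mul_sum_sum_div hsub hnn hc hL
    (fun i r ↦ (hsmall i r).trans (by nlinarith [hL r, pow_le_one₀ hε.le hε1.le (n := 3)])) hO
  have hpointwise : ∀ R, (if ∀ r, ∑ i ∈ R, c i r ≤ (1 + ε) * L r then 0 else f R) ≤
      O * (1 + 2 * Fintype.card ι * (1 + ε)) *
        ∑ r, exp (t * (∑ i ∈ R, c i r / L r - (1 + ε))) := fun R ↦ by
    simpa only [sum_div_le_iff (hL _)] using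
      ite_le_mul_sum_exp (Y := fun r ↦ ∑ i ∈ R, c i r / L r) (by linarith) htθ hO0 (hvalue R)
  have htail : ∀ r, bernoulliExpect x
      (fun R ↦ exp (t * (∑ i ∈ R, c i r / L r - (1 + ε)))) ≤ 4 * ε := fun r ↦
    bernoulliExpect_exp_overshoot_le hx hε (by linarith)
      (fun i ↦ ⟨div_nonneg (hc i r) (hL r).le, (div_le_iff₀ (hL r)).2 (hsmall i r)⟩)
      (by simpa only [mul_div_assoc', ← sum_div, div_le_one (hL r)] using hbudget r)
  calc _ ≤ O * (1 + 2 * Fintype.card ι * (1 + ε)) * ∑ _r : ι, 4 * ε := by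
        refine (bernoulliExpect_mono hx hpointwise).trans ?_
        rw [bernoulliExpect_const_mul_sum]
        gcongr with r
        exact htail r
    _ = _ := by rw [sum_const, card_univ, nsmul_eq_mul]; ring

theorem expected_value_nearly_feasible_realizations_general
    (d : ℕ) :
    ∃ C : ℝ, 0 < C ∧
      ∀ (U : Type) [Fintype U] [DecidableEq U],
      ∀ (f : Finset U → ℝ),
        (∀ S T : Finset U, f (S ∪ T) + f (S ∩ T) ≤ f S + f T) →
        (∀ S : Finset U, 0 ≤ f S) →
        f ∅ = 0 →
      ∀ (c : U → Fin d → ℝ), (∀ i r, 0 ≤ c i r) →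
      ∀ (L : Fin d → ℝ), (∀ r, 0 < L r) →
      ∀ (ε : ℝ), 0 < ε → ε < 1 →
        (∀ (i : U) (r : Fin d), c i r ≤ ε ^ 3 * L r) →
      ∀ (O : ℝ),
        IsGreatest
          {y : ℝ | ∃ T : Finset U, (∀ r, ∑ i ∈ T, c i r ≤ L r) ∧ f T = y} O →
      ∀ (x : U → ℝ), (∀ i, 0 ≤ x i ∧ x i ≤ 1) →
        (∀ r, ∑ i : U, x i * c i r ≤ L r) →
        O / 5 ≤ mulExt f x →
        (1 - C * ε) * mulExt f x ≤
          ∑ R : Finset U,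
            (if ∀ r, ∑ i ∈ R, c i r ≤ (1 + ε) * L r then f R else 0) *
              ((∏ i ∈ R, x i) * ∏ i ∈ Rᶜ, (1 - x i)) := by
  refine ⟨80 * ((d : ℝ) + 1) ^ 2, by positivity, ?_⟩
  intro U _ _ f hsub hnn _ c hc L hL ε hε hε1 hsmall O hOpt x hx hbudget hOF
  change _ * bernoulliExpect x f ≤ bernoulliExpect x _
  change O / 5 ≤ bernoulliExpect x f at hOF
  have hsplit :=
    bernoulliExpect_eq_add_ite (x := x) (fun R ↦ ∀ r, ∑ i ∈ R, c i r ≤ (1 + ε) * L r) f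
  have hbad := bernoulliExpect_not_nearlyFeasible_le hsub hnn hc hL hε hε1 hsmall
    (fun T hT ↦ hOpt.2 ⟨T, hT, rfl⟩) hx hbudget
  rw [Fintype.card_fin] at hbad
  have hF : 0 ≤ bernoulliExpect x f :=
    sum_nonneg fun R _ ↦ mul_nonneg (hnn R) (bernoulliWeight_nonneg hx R)
  have hK : 5 * ((1 + 2 * d * (1 + ε)) * (d * (4 * ε))) ≤ 80 * ((d : ℝ) + 1) ^ 2 * ε := by
    have hd : (0 : ℝ) ≤ d := d.cast_nonneg
    nlinarith [mul_nonneg (mul_nonneg hd hd) hε.le, mul_nonneg hd hε.le]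
  have hbad_le : _ ≤ 80 * ((d : ℝ) + 1) ^ 2 * ε * bernoulliExpect x f :=
    calc _ ≤ O * ((1 + 2 * d * (1 + ε)) * (d * (4 * ε))) := hbad
      _ ≤ 5 * bernoulliExpect x f * ((1 + 2 * d * (1 + ε)) * (d * (4 * ε))) := by
        gcongr; linarith
      _ ≤ _ := by nlinarith [mul_le_mul_of_nonneg_left hK hF]
  linarith

theorem expected_value_nearly_feasible_realizations
    (d : ℕ) (hd : 1 ≤ d) :
    ∃ C : ℝ, 0 < C ∧
      ∀ (U : Type) [Fintype U] [DecidableEq U],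
      ∀ (f : Finset U → ℝ),
        (∀ S T : Finset U, f (S ∪ T) + f (S ∩ T) ≤ f S + f T) →
        (∀ S : Finset U, 0 ≤ f S) →
        f ∅ = 0 →
      ∀ (c : U → Fin d → ℝ), (∀ i r, 0 ≤ c i r) →
      ∀ (L : Fin d → ℝ), (∀ r, 0 < L r) →
      ∀ (ε : ℝ), 0 < ε → ε < 1 →
        (∀ (i : U) (r : Fin d), c i r ≤ ε ^ 3 * L r) →
      ∀ (O : ℝ),
        IsGreatest
          {y : ℝ | ∃ T : Finset U, (∀ r, ∑ i ∈ T, c i r ≤ L r) ∧ f T = y} O →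
      ∀ (x : U → ℝ), (∀ i, 0 ≤ x i ∧ x i ≤ 1) →
        (∀ r, ∑ i : U, x i * c i r ≤ L r) →
        O / 5 ≤ mulExt f x →
        (1 - C * ε) * mulExt f x ≤
          ∑ R : Finset U,
            (if ∀ r, ∑ i ∈ R, c i r ≤ (1 + ε) * L r then f R else 0) *
              ((∏ i ∈ R, x i) * ∏ i ∈ Rᶜ, (1 - x i)) :=
  expected_value_nearly_feasible_realizations_general d
end

section
/- For every natural number d ≥ 1 there exists a constant C > 0 (depending only on d) such that the following holds. Let U be a finite type, let f : Finset U → ℝ be a nonnegative submodular set function with f(∅) = 0, let c : U → ℝ^d with c_r(i) ≥ 0, let L ∈ ℝ^d with L_r > 0, and let 0 < ε < 1. Assume every element of U is small, i.e., c_r(i) ≤ ε³·L_r for all i ∈ U and all r. Let 𝒪 = max { f(T) : T ⊆ U feasible }, and let x ∈ [0,1]^U satisfy Σ_{i∈U} x_i·c_r(i) ≤ L_r for all r and F(x) ≥ 𝒪/5, where F is the extension by expectation of f. Then there exists a set D ⊆ U with {i : x_i = 1} ⊆ D ⊆ {i : x_i > 0} (a realization of positive probability of the random set D ~ x) such that D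 is ε-nearly feasible and f(D) ≥ (1 − C·ε)·F(x). -/
/-!
Let `D` contain each `i` independently with probability `x i`, so that `F(x) = 𝔼 f(D)`. Some
outcome of positive probability is at least the mean of `f(D) · 1[D nearly feasible]`, so it
suffices to show that the overfull outcomes contribute at most `C ε F(x)` to `𝔼 f(D)`.

Since all elements are small, a maximum-cardinality feasible subset of an infeasible set fills
some budget to more than half; peeling such subsets off and using submodularity gives
`f(R) ≤ (1 + 2 load(R)) 𝒪`, where `load(R) = Σ_r c_r(R) / L_r`. If `R` overflows budget `r`, then
`1 ≤ exp ((c_r(R) - (1 + ε) L_r) / (ε² L_r))`, and the Chernoff computation bounds the expectation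
of `(1 + 2 load(D))` times this exponential by `(1 + 6d) · 4ε`. Summing over the `d` budgets and
using `𝒪 ≤ 5 F(x)` gives `C = 20 d (6d + 1)`.
-/

open Finset Real

section ProductMeasure

variable {U : Type*} [Fintype U] [DecidableEq U]

/-- The probability that the random set containing each `i` independently with probability `x i`
is `R`. -/
noncomputable def prodWeight (x : U → ℝ) (R : Finset U) : ℝ :=
  (∏ i ∈ R, x i) * ∏ i ∈ Rᶜ, (1 - x i)

lemma mulExt_eq_sum_prodWeight (f : Finset U → ℝ) (x : U → ℝ) :
    mulExt f x = ∑ R, prodWeight x R * f R :=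
  sum_congr rfl fun _ _ => mul_comm _ _

lemma prodWeight_nonneg {x : U → ℝ} (hx : ∀ i, 0 ≤ x i ∧ x i ≤ 1) (R : Finset U) :
    0 ≤ prodWeight x R :=
  mul_nonneg (prod_nonneg fun i _ => (hx i).1) (prod_nonneg fun i _ => sub_nonneg.2 (hx i).2)

lemma mulExt_nonneg {f : Finset U → ℝ} {x : U → ℝ} (hx : ∀ i, 0 ≤ x i ∧ x i ≤ 1)
    (hf : ∀ S, 0 ≤ f S) : 0 ≤ mulExt f x := by
  rw [mulExt_eq_sum_prodWeight]
  exact sum_nonneg fun R _ => mul_nonneg (prodWeight_nonneg hx R) (hf R)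

lemma mem_of_prodWeight_ne_zero {x : U → ℝ} {R : Finset U} (h : prodWeight x R ≠ 0) {i : U}
    (hi : x i = 1) : i ∈ R := by
  by_contra hiR
  exact h (mul_eq_zero_of_right _ (prod_eq_zero (mem_compl.2 hiR) (by rw [hi, sub_self])))

lemma ne_zero_of_prodWeight_ne_zero {x : U → ℝ} {R : Finset U} (h : prodWeight x R ≠ 0) {i : U}
    (hi : i ∈ R) : x i ≠ 0 :=
  fun hxi => h (mul_eq_zero_of_left (prod_eq_zero hi hxi) _)

lemma sum_prodWeight_mul_prod (x g : U → ℝ) :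
    ∑ R, prodWeight x R * ∏ i ∈ R, g i = ∏ i, (x i * g i + (1 - x i)) := by
  rw [prod_add, powerset_univ]
  refine sum_congr rfl fun R _ => ?_
  rw [prodWeight, prod_mul_distrib, compl_eq_univ_sdiff]
  ring

lemma sum_prodWeight (x : U → ℝ) : ∑ R, prodWeight x R = 1 := by
  simpa using sum_prodWeight_mul_prod x 1

-- Subtract from `sum_prodWeight_mul_prod` the same identity with `g i` replaced by `0`.
lemma sum_filter_mem_prodWeight_mul_prod (x g : U → ℝ) (i : U) :
    ∑ R with i ∈ R, prodWeight x R * ∏ j ∈ R, g j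
      = x i * g i * ∏ j ∈ univ.erase i, (x j * g j + (1 - x j)) := by
  set g₀ := Function.update g i 0
  have hg₀i : g₀ i = 0 := Function.update_self ..
  have hg₀j : ∀ j, j ≠ i → g₀ j = g j := fun j hj => Function.update_of_ne hj ..
  have hg₀ : ∀ R : Finset U, ∏ j ∈ R, g₀ j = if i ∈ R then 0 else ∏ j ∈ R, g j := by
    intro R
    split_ifs with hi
    · exact prod_eq_zero hi hg₀i
    · exact prod_congr rfl fun j hj => hg₀j j (ne_of_mem_of_not_mem hj hi)
  have herase : ∏ j ∈ univ.erase i, (x j * g₀ j + (1 - x j))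
      = ∏ j ∈ univ.erase i, (x j * g j + (1 - x j)) :=
    prod_congr rfl fun j hj => by rw [hg₀j j (ne_of_mem_erase hj)]
  calc ∑ R with i ∈ R, prodWeight x R * ∏ j ∈ R, g j
      = ∑ R, prodWeight x R * ∏ j ∈ R, g j - ∑ R, prodWeight x R * ∏ j ∈ R, g₀ j := by
        rw [sum_filter, ← sum_sub_distrib]
        refine sum_congr rfl fun R _ => ?_
        rw [hg₀]
        split_ifs <;> ring
    _ = x i * g i * ∏ j ∈ univ.erase i, (x j * g j + (1 - x j)) := by
        rw [sum_prodWeight_mul_prod, sum_prodWeight_mul_prod, ← mul_prod_erase _ _ (mem_univ i),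
          ← mul_prod_erase _ _ (mem_univ i), herase, hg₀i]
        ring

lemma sum_prodWeight_mul_sum_mul_prod_le {x g a : U → ℝ} (hx : ∀ i, 0 ≤ x i)
    (hg : ∀ i, 1 ≤ g i) (ha : ∀ i, 0 ≤ a i) :
    ∑ R, prodWeight x R * ((∑ i ∈ R, a i) * ∏ i ∈ R, g i)
      ≤ (∑ i, a i * (x i * g i)) * ∏ i, (x i * g i + (1 - x i)) := by
  have hfactor : ∀ i, 1 ≤ x i * g i + (1 - x i) := fun i => by nlinarith [hx i, hg i]
  calc ∑ R, prodWeight x R * ((∑ i ∈ R, a i) * ∏ i ∈ R, g i)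
      = ∑ R, ∑ i ∈ R, a i * (prodWeight x R * ∏ j ∈ R, g j) := by
        refine sum_congr rfl fun R _ => ?_
        rw [sum_mul, mul_sum]
        exact sum_congr rfl fun i _ => by ring
    _ = ∑ i, a i * ∑ R with i ∈ R, prodWeight x R * ∏ j ∈ R, g j := by
        simp_rw [mul_sum]
        exact sum_comm' fun R i => by simp
    _ ≤ ∑ i, a i * (x i * g i * ∏ j, (x j * g j + (1 - x j))) := by
        refine sum_le_sum fun i _ => mul_le_mul_of_nonneg_left ?_ (ha i)
        rw [sum_filter_mem_prodWeight_mul_prod, ← mul_prod_erase _ _ (mem_univ i)]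
        refine mul_le_mul_of_nonneg_left (le_mul_of_one_le_left ?_ (hfactor i)) ?_
        · exact prod_nonneg fun j _ => zero_le_one.trans (hfactor j)
        · exact mul_nonneg (hx i) (zero_le_one.trans (hg i))
    _ = (∑ i, a i * (x i * g i)) * ∏ i, (x i * g i + (1 - x i)) := by
        rw [sum_mul]
        exact sum_congr rfl fun i _ => by ring

end ProductMeasure

lemma exists_pos_and_sum_mul_le {α : Type*} [Fintype α] {p : α → ℝ} (hp : ∀ a, 0 ≤ p a)
    (hp1 : ∑ a, p a = 1) (h : α → ℝ) : ∃ a, 0 < p a ∧ ∑ b, p b * h b ≤ h a := by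
  by_contra! H
  obtain ⟨a, -, ha⟩ := exists_lt_of_sum_lt (s := univ) (f := 0) (g := p) (by simp [hp1])
  have hlt : ∑ b, p b * h b < ∑ b, p b * ∑ b, p b * h b := by
    refine sum_lt_sum (fun b _ => ?_) ⟨a, mem_univ a, mul_lt_mul_of_pos_left (H a ha) ha⟩
    rcases (hp b).eq_or_lt with hb | hb
    · simp [← hb]
    · exact (mul_lt_mul_of_pos_left (H b hb) hb).le
  rw [← sum_mul, hp1, one_mul] at hlt
  exact hlt.false

lemma exists_pos_and_sum_mul_sub_le {α : Type*} [Fintype α] {p g : α → ℝ} {P : α → Prop}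
    [DecidablePred P] (hp : ∀ a, 0 ≤ p a) (hp1 : ∑ a, p a = 1) {δ : ℝ}
    (hbad : ∑ a, p a * (if P a then 0 else g a) ≤ δ) (hlt : δ < ∑ a, p a * g a) :
    ∃ a, 0 < p a ∧ P a ∧ ∑ b, p b * g b - δ ≤ g a := by
  obtain ⟨a, hpa, ha⟩ := exists_pos_and_sum_mul_le hp hp1 fun a => if P a then g a else 0
  have hsplit : ∑ b, p b * g b = ∑ b, p b * (if P b then g b else 0)
      + ∑ b, p b * (if P b then 0 else g b) := by
    rw [← sum_add_distrib]
    exact sum_congr rfl fun b _ => by split_ifs <;> ring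
  have hgood : ∑ b, p b * g b - δ ≤ if P a then g a else 0 := by linarith
  split_ifs at hgood with hPa
  · exact ⟨a, hpa, hPa, hgood⟩
  · linarith

section Packing

variable {U ι : Type*} [Fintype ι] {c : U → ι → ℝ} {L : ι → ℝ}

noncomputable def load (c : U → ι → ℝ) (L : ι → ℝ) (R : Finset U) : ℝ :=
  ∑ i ∈ R, ∑ r, c i r / L r

lemma load_nonneg (hc : ∀ i r, 0 ≤ c i r) (hL : ∀ r, 0 < L r) (R : Finset U) :
    0 ≤ load c L R :=
  sum_nonneg fun i _ => sum_nonneg fun r _ => div_nonneg (hc i r) (hL r).le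

lemma sum_div_le_load (hc : ∀ i r, 0 ≤ c i r) (hL : ∀ r, 0 < L r) (R : Finset U) (r : ι) :
    (∑ i ∈ R, c i r) / L r ≤ load c L R := by
  rw [load, sum_comm, sum_div]
  exact single_le_sum (f := fun r => ∑ i ∈ R, c i r / L r)
    (fun r _ => sum_nonneg fun i _ => div_nonneg (hc i r) (hL r).le) (mem_univ r)

variable [DecidableEq U]

/-- A maximum-cardinality feasible subset of an infeasible set cannot absorb one more element,
so, elements being small, it fills some budget to more than half. -/
lemma exists_feasible_subset_half_lt_load (hc : ∀ i r, 0 ≤ c i r) (hL : ∀ r, 0 < L r)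
    (hsmall : ∀ i r, c i r ≤ L r / 2) {R : Finset U} (hR : ¬ ∀ r, ∑ i ∈ R, c i r ≤ L r) :
    ∃ S ⊆ R, (∀ r, ∑ i ∈ S, c i r ≤ L r) ∧ 1 / 2 < load c L S := by
  set feasible := {S ∈ R.powerset | ∀ r, ∑ i ∈ S, c i r ≤ L r}
  have hempty : ∅ ∈ feasible := by simp [feasible, fun r => (hL r).le]
  obtain ⟨S, hS, hSmax⟩ := exists_max_image feasible card ⟨∅, hempty⟩
  rw [mem_filter, mem_powerset] at hS
  obtain ⟨hSR, hSfeas⟩ := hS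
  obtain ⟨i, hiR, hiS⟩ := exists_of_ssubset (hSR.ssubset_of_ne fun h => hR (h ▸ hSfeas))
  have hinsert : insert i S ∉ feasible := fun h => by
    have := hSmax _ h
    rw [card_insert_of_notMem hiS] at this
    omega
  simp only [feasible, mem_filter, mem_powerset, insert_subset_iff, hiR, hSR, true_and,
    not_forall, not_le, sum_insert hiS] at hinsert
  obtain ⟨r, hr⟩ := hinsert
  refine ⟨S, hSR, hSfeas, lt_of_lt_of_le ?_ (sum_div_le_load hc hL S r)⟩
  rw [lt_div_iff₀ (hL r)]
  linarith [hsmall i r]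

lemma le_one_add_two_mul_load_mul {f : Finset U → ℝ}
    (hsub : ∀ S T : Finset U, f (S ∪ T) + f (S ∩ T) ≤ f S + f T) (hf : 0 ≤ f ∅)
    (hc : ∀ i r, 0 ≤ c i r) (hL : ∀ r, 0 < L r) (hsmall : ∀ i r, c i r ≤ L r / 2) {O : ℝ}
    (hO : ∀ T : Finset U, (∀ r, ∑ i ∈ T, c i r ≤ L r) → f T ≤ O) (R : Finset U) :
    f R ≤ (1 + 2 * load c L R) * O := by
  have hO0 : 0 ≤ O := hf.trans (hO ∅ fun r => by simp [(hL r).le])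
  induction R using Finset.strongInduction with
  | H R ih =>
    by_cases hR : ∀ r, ∑ i ∈ R, c i r ≤ L r
    · nlinarith [hO R hR, load_nonneg hc hL R]
    obtain ⟨S, hSR, hSfeas, hS⟩ := exists_feasible_subset_half_lt_load hc hL hsmall hR
    have hSne : S.Nonempty := nonempty_iff_ne_empty.2 fun h => by simp [h, load] at hS; linarith
    have hsplit : f R ≤ f S + f (R \ S) := by
      have := hsub S (R \ S)
      rw [union_sdiff_of_subset hSR, inter_sdiff_self] at this
      linarith
    have hload : load c L (R \ S) = load c L R - load c L S := sum_sdiff_eq_sub hSR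
    have hrest := ih (R \ S) (sdiff_ssubset hSR hSne)
    rw [hload] at hrest
    nlinarith [hO S hSfeas]

end Packing

lemma exp_mul_le_one_add_mul {s : ℝ} (hs0 : 0 ≤ s) (hs1 : s ≤ 1) (u : ℝ) :
    exp (s * u) ≤ 1 + s * (exp u - 1) := by
  have h := convexOn_exp.2 (Set.mem_univ 0) (Set.mem_univ u) (sub_nonneg.2 hs1) hs0
    (sub_add_cancel 1 s)
  simp only [smul_eq_mul, mul_zero, zero_add, exp_zero] at h
  linarith

-- The moment generating function estimate of the Chernoff bound, at parameter `1 / (ε ^ 2 * L)`.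
lemma prod_one_add_mul_exp_sub_one_le {U : Type*} [Fintype U] {x c : U → ℝ} {L ε : ℝ}
    (hx : ∀ i, 0 ≤ x i) (hc : ∀ i, 0 ≤ c i) (hL : 0 < L) (hε : 0 < ε)
    (hsmall : ∀ i, c i ≤ ε ^ 3 * L) (hxc : ∑ i, x i * c i ≤ L) :
    ∏ i, (x i * exp (c i / (ε ^ 2 * L)) + (1 - x i)) ≤ exp ((exp ε - 1) / ε ^ 3) := by
  have hM : 0 < ε ^ 3 * L := by positivity
  have hchord : ∀ i, exp (c i / (ε ^ 2 * L)) - 1 ≤ (exp ε - 1) / (ε ^ 3 * L) * c i := by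
    intro i
    have h := exp_mul_le_one_add_mul (div_nonneg (hc i) hM.le) ((div_le_one hM).2 (hsmall i)) ε
    have hs : c i / (ε ^ 3 * L) * ε = c i / (ε ^ 2 * L) := by field_simp
    rw [hs] at h
    linarith [show c i / (ε ^ 3 * L) * (exp ε - 1) = (exp ε - 1) / (ε ^ 3 * L) * c i by ring]
  calc ∏ i, (x i * exp (c i / (ε ^ 2 * L)) + (1 - x i))
      = ∏ i, (1 + x i * (exp (c i / (ε ^ 2 * L)) - 1)) := prod_congr rfl fun i _ => by ring
    _ ≤ exp (∑ i, x i * (exp (c i / (ε ^ 2 * L)) - 1)) := by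
        refine prod_one_add_le_exp_sum _ fun i => mul_nonneg (hx i) ?_
        exact sub_nonneg.2 (one_le_exp (div_nonneg (hc i) (by positivity)))
    _ ≤ exp ((exp ε - 1) / ε ^ 3) := by
        refine exp_le_exp.2 ?_
        calc ∑ i, x i * (exp (c i / (ε ^ 2 * L)) - 1)
            ≤ ∑ i, (exp ε - 1) / (ε ^ 3 * L) * (x i * c i) :=
              sum_le_sum fun i _ => by nlinarith [mul_le_mul_of_nonneg_left (hchord i) (hx i)]
          _ = (exp ε - 1) / (ε ^ 3 * L) * ∑ i, x i * c i := (mul_sum ..).symm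
          _ ≤ (exp ε - 1) / (ε ^ 3 * L) * L := by
              have : 0 ≤ exp ε - 1 := sub_nonneg.2 (one_le_exp hε.le)
              gcongr
          _ = (exp ε - 1) / ε ^ 3 := by field_simp

lemma exp_exp_sub_one_div_sub_le {ε : ℝ} (hε0 : 0 < ε) (hε : ε ≤ 1 / 2) :
    exp ((exp ε - 1) / ε ^ 3 - (1 + ε) / ε ^ 2) ≤ 4 * ε := by
  have hquad : exp ε - 1 - ε ≤ 3 / 4 * ε ^ 2 := by
    have h := exp_bound' hε0.le (by linarith) (n := 2) (by norm_num)
    norm_num [sum_range_succ] at h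
    linarith
  have hexponent : (exp ε - 1) / ε ^ 3 - (1 + ε) / ε ^ 2 ≤ -(4 * ε)⁻¹ := by
    rw [div_sub_div _ _ (by positivity) (by positivity), div_le_iff₀ (by positivity)]
    field_simp
    nlinarith [pow_pos hε0 3]
  calc exp ((exp ε - 1) / ε ^ 3 - (1 + ε) / ε ^ 2)
      ≤ exp (-(4 * ε)⁻¹) := exp_le_exp.2 hexponent
    _ ≤ 4 * ε := by
        rw [exp_neg, inv_le_comm₀ (exp_pos _) (by positivity)]
        linarith [add_one_le_exp (4 * ε)⁻¹]

section Chernoff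

variable {U ι : Type*} [Fintype U] [Fintype ι] {c : U → ι → ℝ} {L : ι → ℝ} {x : U → ℝ}

lemma sum_mul_sum_div_le_card (hxc : ∀ r, ∑ i, x i * c i r ≤ L r) (hL : ∀ r, 0 < L r) :
    ∑ i, x i * ∑ r, c i r / L r ≤ Fintype.card ι :=
  calc ∑ i, x i * ∑ r, c i r / L r = ∑ r, (∑ i, x i * c i r) / L r := by
        simp_rw [mul_sum, sum_div]
        rw [sum_comm]
        exact sum_congr rfl fun r _ => sum_congr rfl fun i _ => by ring
    _ ≤ ∑ _r : ι, (1 : ℝ) := sum_le_sum fun r _ => (div_le_one (hL r)).2 (hxc r)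
    _ = Fintype.card ι := by simp

variable [DecidableEq U]

lemma sum_prodWeight_mul_one_add_two_mul_load_mul_prod_le {g : U → ℝ} (hx : ∀ i, 0 ≤ x i)
    (hg1 : ∀ i, 1 ≤ g i) (hg3 : ∀ i, g i ≤ 3) (hc : ∀ i r, 0 ≤ c i r) (hL : ∀ r, 0 < L r)
    (hxc : ∀ r, ∑ i, x i * c i r ≤ L r) :
    ∑ R, prodWeight x R * ((1 + 2 * load c L R) * ∏ i ∈ R, g i)
      ≤ (1 + 6 * Fintype.card ι) * ∏ i, (x i * g i + (1 - x i)) := by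
  set a : U → ℝ := fun i => ∑ r, c i r / L r
  have ha : ∀ i, 0 ≤ a i := fun i => sum_nonneg fun r _ => div_nonneg (hc i r) (hL r).le
  have hP : 0 ≤ ∏ i, (x i * g i + (1 - x i)) :=
    prod_nonneg fun i _ => by nlinarith [hx i, hg1 i]
  have hmean : ∑ i, a i * (x i * g i) ≤ 3 * Fintype.card ι :=
    calc ∑ i, a i * (x i * g i) ≤ ∑ i, 3 * (x i * a i) :=
          sum_le_sum fun i _ => by nlinarith [ha i, hx i, hg3 i, mul_nonneg (ha i) (hx i)]
      _ ≤ 3 * Fintype.card ι := by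
          rw [← mul_sum]
          exact mul_le_mul_of_nonneg_left (sum_mul_sum_div_le_card hxc hL) (by norm_num)
  calc ∑ R, prodWeight x R * ((1 + 2 * load c L R) * ∏ i ∈ R, g i)
      = ∑ R, prodWeight x R * ∏ i ∈ R, g i
          + 2 * ∑ R, prodWeight x R * ((∑ i ∈ R, a i) * ∏ i ∈ R, g i) := by
        rw [mul_sum, ← sum_add_distrib]
        exact sum_congr rfl fun R _ => by rw [load]; ring
    _ ≤ ∏ i, (x i * g i + (1 - x i))
          + 2 * ((3 * Fintype.card ι) * ∏ i, (x i * g i + (1 - x i))) := by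
        rw [sum_prodWeight_mul_prod]
        gcongr
        exact (sum_prodWeight_mul_sum_mul_prod_le hx hg1 ha).trans
          (mul_le_mul_of_nonneg_right hmean hP)
    _ = (1 + 6 * Fintype.card ι) * ∏ i, (x i * g i + (1 - x i)) := by ring

lemma sum_prodWeight_mul_one_add_two_mul_load_mul_exp_le {ε : ℝ} (hx : ∀ i, 0 ≤ x i)
    (hc : ∀ i r, 0 ≤ c i r) (hL : ∀ r, 0 < L r) (hε0 : 0 < ε) (hε : ε ≤ 1 / 2)
    (hsmall : ∀ i r, c i r ≤ ε ^ 3 * L r) (hxc : ∀ r, ∑ i, x i * c i r ≤ L r) (r : ι) :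
    ∑ R, prodWeight x R * ((1 + 2 * load c L R) *
        exp ((∑ i ∈ R, c i r - (1 + ε) * L r) / (ε ^ 2 * L r)))
      ≤ (1 + 6 * Fintype.card ι) * (4 * ε) := by
  set g : U → ℝ := fun i => exp (c i r / (ε ^ 2 * L r))
  have hLr := hL r
  have hg1 : ∀ i, 1 ≤ g i := fun i => one_le_exp (div_nonneg (hc i r) (by positivity))
  have hg3 : ∀ i, g i ≤ 3 := by
    intro i
    have hle : c i r / (ε ^ 2 * L r) ≤ 1 := by
      rw [div_le_one (by positivity)]
      calc c i r ≤ ε ^ 3 * L r := hsmall i r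
        _ ≤ ε ^ 2 * L r :=
          mul_le_mul_of_nonneg_right (pow_le_pow_of_le_one hε0.le (by linarith) (by norm_num))
            hLr.le
    linarith [exp_le_exp.2 hle, exp_one_lt_d9]
  have hfactor : ∀ R : Finset U, exp ((∑ i ∈ R, c i r - (1 + ε) * L r) / (ε ^ 2 * L r))
      = (∏ i ∈ R, g i) * exp (-((1 + ε) / ε ^ 2)) := by
    intro R
    rw [← exp_sum, ← exp_add, sub_div, sum_div]
    congr 2
    field_simp
  have hE : 0 ≤ exp (-((1 + ε) / ε ^ 2)) := (exp_pos _).le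
  calc ∑ R, prodWeight x R * ((1 + 2 * load c L R) *
          exp ((∑ i ∈ R, c i r - (1 + ε) * L r) / (ε ^ 2 * L r)))
      = (∑ R, prodWeight x R * ((1 + 2 * load c L R) * ∏ i ∈ R, g i))
          * exp (-((1 + ε) / ε ^ 2)) := by
        rw [sum_mul]
        exact sum_congr rfl fun R _ => by rw [hfactor]; ring
    _ ≤ ((1 + 6 * Fintype.card ι) * exp ((exp ε - 1) / ε ^ 3)) * exp (-((1 + ε) / ε ^ 2)) := by
        refine mul_le_mul_of_nonneg_right ?_ hE
        refine (sum_prodWeight_mul_one_add_two_mul_load_mul_prod_le hx hg1 hg3 hc hL hxc).trans ?_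
        exact mul_le_mul_of_nonneg_left (prod_one_add_mul_exp_sub_one_le hx (fun i => hc i r) hLr
          hε0 (fun i => hsmall i r) (hxc r)) (by positivity)
    _ = (1 + 6 * Fintype.card ι) * exp ((exp ε - 1) / ε ^ 3 - (1 + ε) / ε ^ 2) := by
        rw [mul_assoc, ← exp_add, ← sub_eq_add_neg]
    _ ≤ (1 + 6 * Fintype.card ι) * (4 * ε) :=
        mul_le_mul_of_nonneg_left (exp_exp_sub_one_div_sub_le hε0 hε) (by positivity)

end Chernoff

lemma one_le_sum_exp_of_not_forall_le {U ι : Type*} [Fintype ι] {c : U → ι → ℝ} {L : ι → ℝ}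
    {ε : ℝ} (hL : ∀ r, 0 < L r) {R : Finset U}
    (hR : ¬ ∀ r, ∑ i ∈ R, c i r ≤ (1 + ε) * L r) :
    1 ≤ ∑ r, exp ((∑ i ∈ R, c i r - (1 + ε) * L r) / (ε ^ 2 * L r)) := by
  obtain ⟨r, hr⟩ := not_forall.1 hR
  refine le_trans ?_ (single_le_sum (fun r _ => (exp_pos _).le) (mem_univ r))
  exact one_le_exp (div_nonneg (by linarith [not_le.1 hr]) (mul_nonneg (sq_nonneg ε) (hL r).le))

section Rounding

variable {U ι : Type*} [Fintype U] [DecidableEq U] [Fintype ι] {c : U → ι → ℝ} {L : ι → ℝ}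

/-- Packing bounds the value of an overfull set by its load, and the Chernoff bound in each
dimension makes the expected load on overfull sets small. -/
lemma sum_prodWeight_mul_ite_le {f : Finset U → ℝ}
    (hsub : ∀ S T : Finset U, f (S ∪ T) + f (S ∩ T) ≤ f S + f T) (hf : 0 ≤ f ∅)
    (hc : ∀ i r, 0 ≤ c i r) (hL : ∀ r, 0 < L r) {ε : ℝ} (hε0 : 0 < ε) (hε : ε ≤ 1 / 2)
    (hsmall : ∀ i r, c i r ≤ ε ^ 3 * L r) {O : ℝ}
    (hO : ∀ T : Finset U, (∀ r, ∑ i ∈ T, c i r ≤ L r) → f T ≤ O) {x : U → ℝ}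
    (hx : ∀ i, 0 ≤ x i ∧ x i ≤ 1) (hxc : ∀ r, ∑ i, x i * c i r ≤ L r) :
    ∑ R, prodWeight x R * (if ∀ r, ∑ i ∈ R, c i r ≤ (1 + ε) * L r then 0 else f R)
      ≤ Fintype.card ι * ((1 + 6 * Fintype.card ι) * (4 * ε)) * O := by
  have hO0 : 0 ≤ O := hf.trans (hO ∅ fun r => by simp [(hL r).le])
  have hsmall' : ∀ i r, c i r ≤ L r / 2 := fun i r => by
    have : ε ^ 3 ≤ 1 / 2 := by nlinarith [pow_le_pow_left₀ hε0.le hε 3]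
    nlinarith [hsmall i r, hL r]
  set tail : Finset U → ι → ℝ := fun R r =>
    prodWeight x R * ((1 + 2 * load c L R) * exp ((∑ i ∈ R, c i r - (1 + ε) * L r) / (ε ^ 2 * L r)))
  have htail : ∀ R r, 0 ≤ tail R r := fun R r =>
    mul_nonneg (prodWeight_nonneg hx R)
      (mul_nonneg (by linarith [load_nonneg hc hL R]) (exp_pos _).le)
  have hpointwise : ∀ R, prodWeight x R * (if ∀ r, ∑ i ∈ R, c i r ≤ (1 + ε) * L r then 0 else f R)
      ≤ O * ∑ r, tail R r := by
    intro R
    split_ifs with hR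
    · rw [mul_zero]
      exact mul_nonneg hO0 (sum_nonneg fun r _ => htail R r)
    · have hpack := le_one_add_two_mul_load_mul hsub hf hc hL hsmall' hO R
      have hexp := one_le_sum_exp_of_not_forall_le hL hR
      have hval : 0 ≤ (1 + 2 * load c L R) * O := mul_nonneg (by linarith [load_nonneg hc hL R]) hO0
      calc prodWeight x R * f R
          ≤ prodWeight x R * ((1 + 2 * load c L R) * O *
              ∑ r, exp ((∑ i ∈ R, c i r - (1 + ε) * L r) / (ε ^ 2 * L r))) :=
            mul_le_mul_of_nonneg_left (hpack.trans (le_mul_of_one_le_right hval hexp))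
              (prodWeight_nonneg hx R)
        _ = O * ∑ r, tail R r := by
            simp only [tail, mul_sum]
            exact sum_congr rfl fun r _ => by ring
  calc ∑ R, prodWeight x R * (if ∀ r, ∑ i ∈ R, c i r ≤ (1 + ε) * L r then 0 else f R)
      ≤ ∑ R, O * ∑ r, tail R r := sum_le_sum fun R _ => hpointwise R
    _ = O * ∑ r, ∑ R, tail R r := by rw [← mul_sum, sum_comm]
    _ ≤ O * ∑ _r : ι, (1 + 6 * Fintype.card ι) * (4 * ε) :=
        mul_le_mul_of_nonneg_left (sum_le_sum fun r _ =>
          sum_prodWeight_mul_one_add_two_mul_load_mul_exp_le (fun i => (hx i).1) hc hL hε0 hε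
            hsmall hxc r) hO0
    _ = Fintype.card ι * ((1 + 6 * Fintype.card ι) * (4 * ε)) * O := by
        rw [sum_const, card_univ, nsmul_eq_mul]
        ring

lemma exists_nearly_feasible_realization_of_lt {f : Finset U → ℝ}
    (hsub : ∀ S T : Finset U, f (S ∪ T) + f (S ∩ T) ≤ f S + f T) (hf : ∀ S, 0 ≤ f S)
    (hc : ∀ i r, 0 ≤ c i r) (hL : ∀ r, 0 < L r) {ε : ℝ} (hε0 : 0 < ε) (hε : ε ≤ 1 / 2)
    (hsmall : ∀ i r, c i r ≤ ε ^ 3 * L r) {O : ℝ}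
    (hO : ∀ T : Finset U, (∀ r, ∑ i ∈ T, c i r ≤ L r) → f T ≤ O) {x : U → ℝ}
    (hx : ∀ i, 0 ≤ x i ∧ x i ≤ 1) (hxc : ∀ r, ∑ i, x i * c i r ≤ L r)
    (hlt : Fintype.card ι * ((1 + 6 * Fintype.card ι) * (4 * ε)) * O < mulExt f x) :
    ∃ D, 0 < prodWeight x D ∧ (∀ r, ∑ i ∈ D, c i r ≤ (1 + ε) * L r) ∧
      mulExt f x - Fintype.card ι * ((1 + 6 * Fintype.card ι) * (4 * ε)) * O ≤ f D := by
  rw [mulExt_eq_sum_prodWeight] at hlt ⊢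
  exact exists_pos_and_sum_mul_sub_le (prodWeight_nonneg hx) (sum_prodWeight x)
    (sum_prodWeight_mul_ite_le hsub (hf ∅) hc hL hε0 hε hsmall hO hx hxc) hlt

end Rounding

lemma sum_filter_eq_one_le_sum_mul {U : Type*} [Fintype U] {x c : U → ℝ}
    (hx : ∀ i, 0 ≤ x i) (hc : ∀ i, 0 ≤ c i) : ∑ i with x i = 1, c i ≤ ∑ i, x i * c i :=
  calc ∑ i with x i = 1, c i = ∑ i with x i = 1, x i * c i :=
        sum_congr rfl fun i hi => by rw [(mem_filter.1 hi).2, one_mul]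
    _ ≤ ∑ i, x i * c i :=
        sum_le_sum_of_subset_of_nonneg (filter_subset _ _) fun i _ _ => mul_nonneg (hx i) (hc i)

theorem exists_nearly_feasible_realization
    (d : ℕ) (hd : 1 ≤ d) :
    ∃ C : ℝ, 0 < C ∧
      ∀ (U : Type) [Fintype U] [DecidableEq U],
      ∀ (f : Finset U → ℝ),
        (∀ S T : Finset U, f (S ∪ T) + f (S ∩ T) ≤ f S + f T) →
        (∀ S : Finset U, 0 ≤ f S) →
        f ∅ = 0 →
      ∀ (c : U → Fin d → ℝ), (∀ i r, 0 ≤ c i r) →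
      ∀ (L : Fin d → ℝ), (∀ r, 0 < L r) →
      ∀ (ε : ℝ), 0 < ε → ε < 1 →
        (∀ (i : U) (r : Fin d), c i r ≤ ε ^ 3 * L r) →
      ∀ (O : ℝ),
        IsGreatest
          {y : ℝ | ∃ T : Finset U, (∀ r, ∑ i ∈ T, c i r ≤ L r) ∧ f T = y} O →
      ∀ (x : U → ℝ), (∀ i, 0 ≤ x i ∧ x i ≤ 1) →
        (∀ r, ∑ i : U, x i * c i r ≤ L r) →
        O / 5 ≤ mulExt f x →
        ∃ D : Finset U,
          (∀ i : U, x i = 1 → i ∈ D) ∧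
          (∀ i ∈ D, 0 < x i) ∧
          (∀ r, ∑ i ∈ D, c i r ≤ (1 + ε) * L r) ∧
          (1 - C * ε) * mulExt f x ≤ f D := by
  have hd' : (1 : ℝ) ≤ d := by exact_mod_cast hd
  refine ⟨20 * d * (6 * d + 1), by positivity, ?_⟩
  intro U _ _ f hsub hf _ c hc L hL ε hε0 _ hsmall O hO x hx hxc hOF
  by_cases hdeg : (1 - 20 * d * (6 * d + 1) * ε) * mulExt f x ≤ 0
  · refine ⟨({i | x i = 1} : Finset U), by simp, by simp +contextual, fun r => ?_,
      hdeg.trans (hf _)⟩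
    have := sum_filter_eq_one_le_sum_mul (fun i => (hx i).1) (fun i => hc i r)
    nlinarith [hxc r, hL r]
  have hF : 0 ≤ mulExt f x := mulExt_nonneg hx hf
  have hCε : 20 * d * (6 * d + 1) * ε < 1 := by
    by_contra h
    exact hdeg (mul_nonpos_of_nonpos_of_nonneg (by linarith) hF)
  have hε : ε ≤ 1 / 2 := by
    nlinarith [mul_le_mul_of_nonneg_right (show (2 : ℝ) ≤ 20 * d * (6 * d + 1) by nlinarith) hε0.le]
  have hδ : d * ((1 + 6 * d) * (4 * ε)) * O ≤ 20 * d * (6 * d + 1) * ε * mulExt f x := by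
    nlinarith [mul_le_mul_of_nonneg_left hOF (show (0 : ℝ) ≤ d * (1 + 6 * d) * 4 * ε by positivity)]
  obtain ⟨D, hwD, hDfeas, hD⟩ := exists_nearly_feasible_realization_of_lt hsub hf hc hL hε0 hε
    hsmall (fun T hT => hO.2 ⟨T, hT, rfl⟩) hx hxc (by rw [Fintype.card_fin]; nlinarith)
  rw [Fintype.card_fin] at hD
  exact ⟨D, fun i => mem_of_prodWeight_ne_zero hwD.ne',
    fun i hi => (hx i).1.lt_of_ne' (ne_zero_of_prodWeight_ne_zero hwD.ne' hi), hDfeas,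
    by nlinarith⟩
end

section
/- Let d ≥ 1 and k ≥ 1 be natural numbers, let 0 < ε < 1, let U be a finite type, let f : Finset U → ℝ be a submodular set function, let c : U → ℝ^d with c_r(i) ≥ 0, and let L ∈ ℝ^d with L_r > 0. Let x ∈ [0,1]^U be a vector with at most k fractional entries (i.e., |{ i : 0 < x_i < 1 }| ≤ k), such that every i with 0 < x_i < 1 satisfies c_r(i) ≤ ε³·L_r for all r, and such that Σ_{i∈U} x_i · c_r(i) ≤ L_r for all r. Then there exists a vector x' ∈ [0,1]^U with at most (8·ln(2k)/ε)^d fractional entries such that Σ_{i∈U} x'_i · c_r(i) ≤ (1+ε)·L_r for all r and F(x') ≥ F(x), where F is the extension by expectation of f. -/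
/-!
The multilinear extension `F` is affine in each coordinate, and the coefficient of `y i * y j` is
the multilinear extension of the second difference `f (R + i + j) - f (R + i) - f (R + j) + f R`,
which is nonpositive by submodularity. So `F` is convex along `y + t • (e i - e j)`, and moving to
an endpoint of the segment inside the unit cube makes `y i` or `y j` integral without decreasing
`F`, while keeping `∑ l, y l • w l` whenever `w i = w j` (pipage rounding).

Round the costs of the fractional elements up to the grid `ε ^ 3 * L r / q ^ t`, `t ≤ M`, where
`q = 1 + ε / 2` and `q ^ M ≥ 2 * k`. Each cost grows at most by the factor `q` plus
`ε ^ 3 * L r / q ^ M`, so the budget grows by at most `ε * L r`. Pipage rounding along pairs of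
fractional elements with equal rounded cost vectors ends with fractional elements whose cost vectors
are pairwise distinct, hence at most `(M + 1) ^ d ≤ (8 * log (2 * k) / ε) ^ d` of them.
-/

open scoped Classical

open Finset Function

lemma le_max_quadratic_of_nonneg {p s u : ℝ} (q r : ℝ) (hp : 0 ≤ p) (hs : s ≤ 0) (hu : 0 ≤ u) :
    r ≤ max (p * s ^ 2 + q * s + r) (p * u ^ 2 + q * u + r) := by
  rcases le_total 0 q with hq | hq
  · exact le_max_of_le_right (by nlinarith)
  · exact le_max_of_le_left (by nlinarith)

noncomputable def fractionalSet {U : Type*} [Fintype U] (y : U → ℝ) : Finset U :=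
  univ.filter fun i => 0 < y i ∧ y i < 1

@[simp]
lemma mem_fractionalSet {U : Type*} [Fintype U] {y : U → ℝ} {i : U} :
    i ∈ fractionalSet y ↔ 0 < y i ∧ y i < 1 := by
  simp [fractionalSet]

section Transfer

variable {U : Type*} [DecidableEq U]

lemma marginal_marginal_nonpos (f : Finset U → ℝ)
    (hsub : ∀ S T : Finset U, f (S ∪ T) + f (S ∩ T) ≤ f S + f T) {i j : U} (hij : i ≠ j)
    (R : Finset U) :
    (f (insert j (insert i R)) - f (insert i R)) - (f (insert j R) - f R) ≤ 0 := by
  have hunion : insert i R ∪ insert j R = insert j (insert i R) := by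
    ext l
    simp only [mem_union, mem_insert]
    tauto
  have hinter : insert i R ∩ insert j R = R := by
    ext l
    simp only [mem_inter, mem_insert]
    constructor
    · rintro ⟨rfl | h, rfl | h'⟩ <;> first | exact absurd rfl hij | assumption
    · exact fun h => ⟨Or.inr h, Or.inr h⟩
  have := hsub (insert i R) (insert j R)
  rw [hunion, hinter] at this
  linarith

def transfer (y : U → ℝ) (i j : U) (t : ℝ) : U → ℝ :=
  update (update y i (y i + t)) j (y j - t)

lemma transfer_apply_left (y : U → ℝ) {i j : U} (hij : i ≠ j) (t : ℝ) :
    transfer y i j t i = y i + t := by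
  rw [transfer, update_of_ne hij, update_self]

lemma transfer_apply_right (y : U → ℝ) (i j : U) (t : ℝ) : transfer y i j t j = y j - t :=
  update_self ..

lemma transfer_apply_of_ne (y : U → ℝ) {i j l : U} (hi : l ≠ i) (hj : l ≠ j) (t : ℝ) :
    transfer y i j t l = y l := by
  rw [transfer, update_of_ne hj, update_of_ne hi]

lemma transfer_mem_unitCube {y : U → ℝ} (hy : ∀ l, 0 ≤ y l ∧ y l ≤ 1) {i j : U} (hij : i ≠ j)
    {t : ℝ} (hi : 0 ≤ y i + t ∧ y i + t ≤ 1) (hj : 0 ≤ y j - t ∧ y j - t ≤ 1) (l : U) :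
    0 ≤ transfer y i j t l ∧ transfer y i j t l ≤ 1 := by
  by_cases hli : l = i
  · rwa [hli, transfer_apply_left _ hij]
  by_cases hlj : l = j
  · rwa [hlj, transfer_apply_right]
  rw [transfer_apply_of_ne _ hli hlj]
  exact hy l

variable [Fintype U]

lemma sum_transfer_smul {E : Type*} [AddCommGroup E] [Module ℝ E] (y : U → ℝ) {w : U → E}
    {i j : U} (hij : i ≠ j) (hw : w i = w j) (t : ℝ) :
    ∑ l, transfer y i j t l • w l = ∑ l, y l • w l := by
  have h : ∀ l, transfer y i j t l • w l =
      y l • w l + ((Pi.single i t : U → ℝ) l - (Pi.single j t : U → ℝ) l) • w l := by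
    intro l
    by_cases hli : l = i
    · subst hli
      simp [transfer_apply_left _ hij, hij, add_smul]
    by_cases hlj : l = j
    · subst hlj
      simp [transfer_apply_right, hli, sub_smul]
      abel
    simp [transfer_apply_of_ne _ hli hlj, hli, hlj]
  simp only [h, sum_add_distrib, sub_smul, sum_sub_distrib, Pi.single_apply, ite_smul, zero_smul,
    sum_ite_eq', mem_univ, if_true, hw, sub_self, add_zero]

lemma fractionalSet_transfer_ssubset {y : U → ℝ} {i j : U} (hij : i ≠ j)
    (hi : i ∈ fractionalSet y) (hj : j ∈ fractionalSet y) {t : ℝ}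
    (hend : ¬(0 < y i + t ∧ y i + t < 1) ∨ ¬(0 < y j - t ∧ y j - t < 1)) :
    fractionalSet (transfer y i j t) ⊂ fractionalSet y := by
  have hsub : fractionalSet (transfer y i j t) ⊆ fractionalSet y := by
    intro l hl
    by_cases hli : l = i
    · rwa [hli]
    by_cases hlj : l = j
    · rwa [hlj]
    rwa [mem_fractionalSet, transfer_apply_of_ne _ hli hlj, ← mem_fractionalSet] at hl
  refine (ssubset_iff_of_subset hsub).2 ?_
  rcases hend with hend | hend
  · exact ⟨i, hi, by rwa [mem_fractionalSet, transfer_apply_left _ hij]⟩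
  · exact ⟨j, hj, by rwa [mem_fractionalSet, transfer_apply_right]⟩

end Transfer

section MultilinearExtension

variable {U : Type*} [Fintype U] [DecidableEq U]

lemma sum_eq_sum_powerset_erase_add_insert {M : Type*} [AddCommMonoid M] (h : Finset U → M)
    (i : U) : ∑ R, h R = ∑ R ∈ (univ.erase i).powerset, (h R + h (insert i R)) := by
  rw [sum_add_distrib, ← sum_powerset_insert (notMem_erase i univ), insert_erase (mem_univ i),
    powerset_univ]

lemma mulExt_update_eq_sum (g : Finset U → ℝ) (y : U → ℝ) (i : U) (a : ℝ) :
    mulExt g (update y i a) = ∑ R ∈ (univ.erase i).powerset,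
      ((1 - a) * g R + a * g (insert i R)) * ((∏ l ∈ R, y l) * ∏ l ∈ Rᶜ.erase i, (1 - y l)) := by
  rw [mulExt, sum_eq_sum_powerset_erase_add_insert _ i]
  refine sum_congr rfl fun R hR => ?_
  have hi : i ∉ R := fun h => by simpa using mem_powerset.1 hR h
  have hoff : ∀ l ∈ Rᶜ.erase i, 1 - update y i a l = 1 - y l := fun l hl => by
    rw [update_of_ne (ne_of_mem_erase hl)]
  rw [prod_insert hi, compl_insert, prod_update_of_notMem hi, update_self, prod_congr rfl hoff,
    ← mul_prod_erase Rᶜ _ (mem_compl.2 hi), update_self, prod_congr rfl hoff]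
  ring

lemma mulExt_update (g : Finset U → ℝ) (y : U → ℝ) (i : U) (a : ℝ) :
    mulExt g (update y i a) =
      mulExt g (update y i 0) + a * mulExt (fun R => g (insert i R) - g R) (update y i 0) := by
  rw [mulExt_update_eq_sum, mulExt_update_eq_sum, mulExt_update_eq_sum, mul_sum,
    ← sum_add_distrib]
  refine sum_congr rfl fun R _ => ?_
  ring

lemma mulExt_update_update (g : Finset U → ℝ) (y : U → ℝ) {i j : U} (hij : i ≠ j) (a b : ℝ) :
    mulExt g (update (update y i a) j b) =
      mulExt g (update (update y j 0) i 0)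
        + a * mulExt (fun R => g (insert i R) - g R) (update (update y j 0) i 0)
        + b * mulExt (fun R => g (insert j R) - g R) (update (update y j 0) i 0)
        + a * b * mulExt (fun R => (g (insert j (insert i R)) - g (insert i R))
            - (g (insert j R) - g R)) (update (update y j 0) i 0) := by
  rw [mulExt_update _ _ j, update_comm hij, mulExt_update _ _ i a, mulExt_update _ _ i a]
  ring

lemma mulExt_nonpos {g : Finset U → ℝ} (hg : ∀ R, g R ≤ 0) {y : U → ℝ}
    (hy : ∀ l, 0 ≤ y l ∧ y l ≤ 1) : mulExt g y ≤ 0 :=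
  sum_nonpos fun R _ => mul_nonpos_of_nonpos_of_nonneg (hg R) <|
    mul_nonneg (prod_nonneg fun l _ => (hy l).1) (prod_nonneg fun l _ => sub_nonneg.2 (hy l).2)

lemma exists_mulExt_transfer_eq_quadratic (f : Finset U → ℝ)
    (hsub : ∀ S T : Finset U, f (S ∪ T) + f (S ∩ T) ≤ f S + f T) {y : U → ℝ}
    (hy : ∀ l, 0 ≤ y l ∧ y l ≤ 1) {i j : U} (hij : i ≠ j) :
    ∃ p q : ℝ, 0 ≤ p ∧ ∀ t, mulExt f (transfer y i j t) = p * t ^ 2 + q * t + mulExt f y := by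
  have hy₀ : ∀ l, 0 ≤ update (update y j 0) i 0 l ∧ update (update y j 0) i 0 l ≤ 1 := by
    intro l
    by_cases hli : l = i
    · subst hli; simp
    by_cases hlj : l = j
    · subst hlj; simp [hli]
    simp only [update_of_ne hli, update_of_ne hlj, hy l, and_self]
  obtain ⟨δ, β, γ, α, hα, hexp⟩ : ∃ δ β γ α : ℝ, α ≤ 0 ∧ ∀ a b,
      mulExt f (update (update y i a) j b) = δ + a * β + b * γ + a * b * α :=
    ⟨_, _, _, _, mulExt_nonpos (marginal_marginal_nonpos f hsub hij) hy₀,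
      mulExt_update_update f y hij⟩
  have hy_eq := hexp (y i) (y j)
  simp only [update_eq_self] at hy_eq
  refine ⟨-α, α * (y j - y i) + β - γ, neg_nonneg.2 hα, fun t => ?_⟩
  rw [transfer, hexp, hy_eq]
  ring

lemma exists_transfer_ssubset (f : Finset U → ℝ)
    (hsub : ∀ S T : Finset U, f (S ∪ T) + f (S ∩ T) ≤ f S + f T) {y : U → ℝ}
    (hy : ∀ l, 0 ≤ y l ∧ y l ≤ 1) {i j : U} (hij : i ≠ j)
    (hi : i ∈ fractionalSet y) (hj : j ∈ fractionalSet y) :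
    ∃ t, (∀ l, 0 ≤ transfer y i j t l ∧ transfer y i j t l ≤ 1) ∧
      fractionalSet (transfer y i j t) ⊂ fractionalSet y ∧
      mulExt f y ≤ mulExt f (transfer y i j t) := by
  obtain ⟨p, q, hp, hquad⟩ := exists_mulExt_transfer_eq_quadratic f hsub hy hij
  have hyi := mem_fractionalSet.1 hi
  have hyj := mem_fractionalSet.1 hj
  set s := max (-y i) (y j - 1) with hs
  set u := min (1 - y i) (y j) with hu
  have hle := le_max_quadratic_of_nonneg q (mulExt f y) hp (s := s) (u := u)
    (max_le (by linarith) (by linarith)) (le_min (by linarith) (by linarith))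
  rw [← hquad, ← hquad] at hle
  rcases le_max_iff.1 hle with hF | hF
  · refine ⟨s, transfer_mem_unitCube hy hij ⟨?_, ?_⟩ ⟨?_, ?_⟩,
      fractionalSet_transfer_ssubset hij hi hj ?_, hF⟩
    · linarith [le_max_left (-y i) (y j - 1)]
    · linarith [max_le (by linarith : -y i ≤ 1 - y i) (by linarith : y j - 1 ≤ 1 - y i)]
    · linarith [max_le (by linarith : -y i ≤ y j) (by linarith : y j - 1 ≤ y j)]
    · linarith [le_max_right (-y i) (y j - 1)]
    · rcases max_choice (-y i) (y j - 1) with h | h <;> rw [hs, h]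
      · left; norm_num
      · right; norm_num
  · refine ⟨u, transfer_mem_unitCube hy hij ⟨?_, ?_⟩ ⟨?_, ?_⟩,
      fractionalSet_transfer_ssubset hij hi hj ?_, hF⟩
    · linarith [le_min (by linarith : -y i ≤ 1 - y i) (by linarith : -y i ≤ y j)]
    · linarith [min_le_left (1 - y i) (y j)]
    · linarith [min_le_right (1 - y i) (y j)]
    · linarith [le_min (by linarith : y j - 1 ≤ 1 - y i) (by linarith : y j - 1 ≤ y j)]
    · rcases min_choice (1 - y i) (y j) with h | h <;> rw [hu, h]
      · left; norm_num
      · right; norm_num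

theorem exists_injOn_fractionalSet {E : Type*} [AddCommGroup E] [Module ℝ E]
    (f : Finset U → ℝ) (hsub : ∀ S T : Finset U, f (S ∪ T) + f (S ∩ T) ≤ f S + f T)
    (w : U → E) (y : U → ℝ) (hy : ∀ l, 0 ≤ y l ∧ y l ≤ 1) :
    ∃ y' : U → ℝ, (∀ l, 0 ≤ y' l ∧ y' l ≤ 1) ∧ fractionalSet y' ⊆ fractionalSet y ∧
      Set.InjOn w (fractionalSet y') ∧ ∑ l, y' l • w l = ∑ l, y l • w l ∧
      mulExt f y ≤ mulExt f y' := by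
  induction hn : #(fractionalSet y) using Nat.strong_induction_on generalizing y with
  | _ n ih =>
  by_cases hinj : Set.InjOn w (fractionalSet y)
  · exact ⟨y, hy, subset_rfl, hinj, rfl, le_rfl⟩
  simp only [Set.InjOn, mem_coe] at hinj
  push Not at hinj
  obtain ⟨i, hi, j, hj, hw, hij⟩ := hinj
  obtain ⟨t, hbox, hssub, hF⟩ := exists_transfer_ssubset f hsub hy hij hi hj
  obtain ⟨y', hy', hsub', hinj', hsum, hF'⟩ := ih _ (hn ▸ card_lt_card hssub) _ hbox rfl
  exact ⟨y', hy', hsub'.trans hssub.subset, hinj', hsum.trans (sum_transfer_smul y hij hw t),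
    hF.trans hF'⟩

end MultilinearExtension

section Rounding

noncomputable def geomRoundUp (q B : ℝ) (M : ℕ) (c : ℝ) : ℝ :=
  B / q ^ Nat.findGreatest (fun t => c ≤ B / q ^ t) M

lemma le_geomRoundUp {q B c : ℝ} (M : ℕ) (hcB : c ≤ B) : c ≤ geomRoundUp q B M c :=
  Nat.findGreatest_spec (P := fun t => c ≤ B / q ^ t) (Nat.zero_le M) (by simpa using hcB)

lemma geomRoundUp_le {q B c : ℝ} (hq : 0 < q) (M : ℕ) :
    geomRoundUp q B M c ≤ max (q * c) (B / q ^ M) := by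
  unfold geomRoundUp
  set t := Nat.findGreatest (fun t => c ≤ B / q ^ t) M
  rcases (Nat.findGreatest_le M : t ≤ M).lt_or_eq with ht | ht
  · have hnext : ¬c ≤ B / q ^ (t + 1) := Nat.findGreatest_is_greatest (Nat.lt_succ_self t) ht
    have hstep : B / q ^ t = q * (B / q ^ (t + 1)) := by
      field_simp
      ring
    rw [hstep]
    exact le_max_of_le_left (by nlinarith)
  · rw [show t = M from ht]
    exact le_max_right _ _

lemma exists_geomRoundUp_eq (q B : ℝ) (M : ℕ) (c : ℝ) :
    ∃ t : Fin (M + 1), geomRoundUp q B M c = B / q ^ (t : ℕ) :=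
  ⟨⟨_, Nat.lt_succ_of_le (Nat.findGreatest_le M)⟩, rfl⟩

lemma exists_two_mul_le_pow_and_le_log {ε : ℝ} (hε : 0 < ε) (hε1 : ε < 1) {k : ℕ} (hk : 1 ≤ k) :
    ∃ M : ℕ, 2 * (k : ℝ) ≤ (1 + ε / 2) ^ M ∧ (M : ℝ) + 1 ≤ 8 * Real.log (2 * k) / ε := by
  set q := 1 + ε / 2
  have hk2 : (2 : ℝ) ≤ 2 * k := by norm_cast; omega
  have hlogk : Real.log 2 ≤ Real.log (2 * k) := Real.log_le_log two_pos hk2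
  have hlogq : ε / 3 ≤ Real.log q := by
    have h := Real.one_sub_inv_le_log_of_pos (x := q) (by positivity)
    have hq : 1 - q⁻¹ = ε / (2 + ε) := by
      simp only [q]
      field_simp
      ring
    rw [hq] at h
    refine le_trans ?_ h
    rw [div_le_div_iff₀ (by norm_num) (by linarith)]
    nlinarith
  refine ⟨⌈Real.log (2 * k) / Real.log q⌉₊, ?_, ?_⟩
  · have hM := Nat.le_ceil (Real.log (2 * k) / Real.log q)
    rw [div_le_iff₀ (by linarith)] at hM
    rw [← Real.log_le_log_iff (by linarith) (by positivity), Real.log_pow]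
    exact hM
  · have hM := Nat.ceil_lt_add_one (div_nonneg (by linarith [Real.log_two_gt_d9]) (by linarith) :
      0 ≤ Real.log (2 * k) / Real.log q)
    have h3 : Real.log (2 * k) / Real.log q ≤ 3 * Real.log (2 * k) / ε := by
      calc Real.log (2 * k) / Real.log q ≤ Real.log (2 * k) / (ε / 3) :=
            div_le_div_of_nonneg_left (by linarith [Real.log_two_gt_d9]) (by positivity) hlogq
        _ = 3 * Real.log (2 * k) / ε := by field_simp
    have h2 : 2 ≤ 5 * Real.log (2 * k) / ε := by
      rw [le_div_iff₀ hε]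
      linarith [Real.log_two_gt_d9]
    have h8 : 8 * Real.log (2 * k) / ε = 3 * Real.log (2 * k) / ε + 5 * Real.log (2 * k) / ε := by
      ring
    linarith

lemma mul_div_le_half_of_two_mul_le {ε l n k Q : ℝ} (hε : 0 ≤ ε) (hε1 : ε ≤ 1) (hl : 0 ≤ l)
    (hn : n ≤ k) (hQ0 : 0 < Q) (hQ : 2 * k ≤ Q) : n * (ε ^ 3 * l / Q) ≤ ε * l / 2 := by
  have hε3 : ε ^ 3 ≤ ε := pow_le_of_le_one hε hε1 (by norm_num)
  have hεl : 0 ≤ ε ^ 3 * l := by positivity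
  rw [mul_div_assoc', div_le_div_iff₀ hQ0 two_pos]
  calc n * (ε ^ 3 * l) * 2 ≤ (2 * k) * (ε ^ 3 * l) := by nlinarith
    _ ≤ Q * (ε ^ 3 * l) := mul_le_mul_of_nonneg_right hQ hεl
    _ ≤ Q * (ε * l) := mul_le_mul_of_nonneg_left (mul_le_mul_of_nonneg_right hε3 hl) hQ0.le
    _ = ε * l * Q := by ring

variable {U : Type*} [Fintype U] [DecidableEq U]

lemma sum_mul_le_of_le_mul_add {x c c' : U → ℝ} {q δ : ℝ} {S : Finset U}
    (hx : ∀ i, 0 ≤ x i ∧ x i ≤ 1) (hδ : 0 ≤ δ)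
    (hc' : ∀ i, c' i ≤ q * c i + if i ∈ S then δ else 0) :
    ∑ i, x i * c' i ≤ q * ∑ i, x i * c i + #S * δ := by
  calc ∑ i, x i * c' i ≤ ∑ i, (q * (x i * c i) + if i ∈ S then δ else 0) := by
        refine sum_le_sum fun i _ => ?_
        have he : 0 ≤ if i ∈ S then δ else 0 := by split_ifs <;> simp [hδ]
        nlinarith [mul_le_mul_of_nonneg_left (hc' i) (hx i).1, hx i]
    _ = q * ∑ i, x i * c i + #S * δ := by
        rw [sum_add_distrib, ← mul_sum, sum_ite_mem, univ_inter, sum_const, nsmul_eq_mul]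

theorem exists_rounded_costs {ι : Type*} [Fintype ι] {k : ℕ} (hk : 1 ≤ k) {ε : ℝ}
    (hε : 0 < ε) (hε1 : ε < 1) {c : U → ι → ℝ} (hc : ∀ i r, 0 ≤ c i r) {L : ι → ℝ}
    (hL : ∀ r, 0 < L r) {x : U → ℝ} (hx : ∀ i, 0 ≤ x i ∧ x i ≤ 1)
    (hfrac : #(fractionalSet x) ≤ k)
    (hsmall : ∀ i ∈ fractionalSet x, ∀ r, c i r ≤ ε ^ 3 * L r)
    (hfeas : ∀ r, ∑ i, x i * c i r ≤ L r) :
    ∃ c' : U → ι → ℝ, (∀ i r, c i r ≤ c' i r) ∧ (∀ r, ∑ i, x i * c' i r ≤ (1 + ε) * L r) ∧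
      ∃ T : Finset (ι → ℝ), (#T : ℝ) ≤ (8 * Real.log (2 * k) / ε) ^ Fintype.card ι ∧
        ∀ i ∈ fractionalSet x, c' i ∈ T := by
  obtain ⟨M, hqM, hM⟩ := exists_two_mul_le_pow_and_le_log hε hε1 hk
  set q := 1 + ε / 2
  have hq : 1 ≤ q := le_add_of_nonneg_right (by positivity)
  set S := fractionalSet x
  let c' : U → ι → ℝ := fun i r =>
    if i ∈ S then geomRoundUp q (ε ^ 3 * L r) M (c i r) else c i r
  refine ⟨c', fun i r => ?_, fun r => ?_, ?_⟩
  · by_cases hi : i ∈ S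
    · simpa [c', hi] using le_geomRoundUp M (hsmall i hi r)
    · simp [c', hi]
  · have hδ : 0 ≤ ε ^ 3 * L r / q ^ M := by have := hL r; positivity
    have hc' : ∀ i, c' i r ≤ q * c i r + if i ∈ S then ε ^ 3 * L r / q ^ M else 0 := by
      intro i
      by_cases hi : i ∈ S
      · simp only [c', hi, if_true]
        exact (geomRoundUp_le (by positivity) M).trans
          (max_le_add_of_nonneg (by have := hc i r; positivity) hδ)
      · simp only [c', hi, if_false, add_zero]
        nlinarith [hc i r]
    have hrest := mul_div_le_half_of_two_mul_le hε.le hε1.le (hL r).le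
      (by exact_mod_cast hfrac : (#S : ℝ) ≤ k) (by positivity) hqM
    calc ∑ i, x i * c' i r ≤ q * ∑ i, x i * c i r + #S * (ε ^ 3 * L r / q ^ M) :=
          sum_mul_le_of_le_mul_add hx hδ hc'
      _ ≤ q * L r + ε * L r / 2 :=
          add_le_add (mul_le_mul_of_nonneg_left (hfeas r) (by positivity)) hrest
      _ = (1 + ε) * L r := by ring
  · refine ⟨univ.image fun t : ι → Fin (M + 1) => fun r => ε ^ 3 * L r / q ^ (t r : ℕ), ?_, ?_⟩
    · calc (#(univ.image fun t : ι → Fin (M + 1) => fun r => ε ^ 3 * L r / q ^ (t r : ℕ)) : ℝ)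
          ≤ ((M + 1) ^ Fintype.card ι : ℕ) := by
            exact_mod_cast card_image_le.trans (by simp)
        _ ≤ (8 * Real.log (2 * k) / ε) ^ Fintype.card ι := by
            push_cast
            exact pow_le_pow_left₀ (by positivity) hM _
    · intro i hi
      choose t ht using fun r => exists_geomRoundUp_eq q (ε ^ 3 * L r) M (c i r)
      exact mem_image.2 ⟨t, mem_univ _, funext fun r => by simp [c', hi, ht]⟩

end Rounding

theorem reduce_fractional_entries_general
    {U : Type*} [Fintype U] [DecidableEq U]
    (d k : ℕ) (hk : 1 ≤ k)
    (ε : ℝ) (hε : 0 < ε) (hε1 : ε < 1)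
    (f : Finset U → ℝ)
    (hsub : ∀ S T : Finset U, f (S ∪ T) + f (S ∩ T) ≤ f S + f T)
    (c : U → Fin d → ℝ) (hc : ∀ i r, 0 ≤ c i r)
    (L : Fin d → ℝ) (hL : ∀ r, 0 < L r)
    (x : U → ℝ) (hx : ∀ i, 0 ≤ x i ∧ x i ≤ 1)
    (hfrac : (Finset.univ.filter fun i : U => 0 < x i ∧ x i < 1).card ≤ k)
    (hsmall : ∀ i : U, 0 < x i → x i < 1 → ∀ r, c i r ≤ ε ^ 3 * L r)
    (hfeas : ∀ r, ∑ i : U, x i * c i r ≤ L r) :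
    ∃ x' : U → ℝ, (∀ i, 0 ≤ x' i ∧ x' i ≤ 1) ∧
      ((Finset.univ.filter fun i : U => 0 < x' i ∧ x' i < 1).card : ℝ)
        ≤ (8 * Real.log (2 * k) / ε) ^ d ∧
      (∀ r, ∑ i : U, x' i * c i r ≤ (1 + ε) * L r) ∧
      mulExt f x ≤ mulExt f x' := by
  obtain ⟨c', hcc', hbudget, T, hT, hmem⟩ := exists_rounded_costs hk hε hε1 hc hL hx hfrac
    (fun i hi => hsmall i (mem_fractionalSet.1 hi).1 (mem_fractionalSet.1 hi).2) hfeas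
  obtain ⟨x', hx', hsubset, hinj, hsum, hF⟩ := exists_injOn_fractionalSet f hsub c' x hx
  refine ⟨x', hx', ?_, fun r => ?_, hF⟩
  · calc (#(fractionalSet x') : ℝ) ≤ #T := by
          exact_mod_cast card_le_card_of_injOn c' (fun i hi => hmem i (hsubset hi)) hinj
      _ ≤ (8 * Real.log (2 * k) / ε) ^ d := by simpa using hT
  · calc ∑ i, x' i * c i r ≤ ∑ i, x' i * c' i r :=
          sum_le_sum fun i _ => mul_le_mul_of_nonneg_left (hcc' i r) (hx' i).1
      _ = ∑ i, x i * c' i r := by simpa using congrFun hsum r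
      _ ≤ (1 + ε) * L r := hbudget r

theorem reduce_fractional_entries
    {U : Type*} [Fintype U] [DecidableEq U]
    (d k : ℕ) (hd : 1 ≤ d) (hk : 1 ≤ k)
    (ε : ℝ) (hε : 0 < ε) (hε1 : ε < 1)
    (f : Finset U → ℝ)
    (hsub : ∀ S T : Finset U, f (S ∪ T) + f (S ∩ T) ≤ f S + f T)
    (c : U → Fin d → ℝ) (hc : ∀ i r, 0 ≤ c i r)
    (L : Fin d → ℝ) (hL : ∀ r, 0 < L r)
    (x : U → ℝ) (hx : ∀ i, 0 ≤ x i ∧ x i ≤ 1)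
    (hfrac : (Finset.univ.filter fun i : U => 0 < x i ∧ x i < 1).card ≤ k)
    (hsmall : ∀ i : U, 0 < x i → x i < 1 → ∀ r, c i r ≤ ε ^ 3 * L r)
    (hfeas : ∀ r, ∑ i : U, x i * c i r ≤ L r) :
    ∃ x' : U → ℝ, (∀ i, 0 ≤ x' i ∧ x' i ≤ 1) ∧
      ((Finset.univ.filter fun i : U => 0 < x' i ∧ x' i < 1).card : ℝ)
        ≤ (8 * Real.log (2 * k) / ε) ^ d ∧
      (∀ r, ∑ i : U, x' i * c i r ≤ (1 + ε) * L r) ∧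
      mulExt f x ≤ mulExt f x' :=
  reduce_fractional_entries_general d k hk ε hε hε1 f hsub c hc L hL x hx hfrac hsmall hfeas
end

section
/- For every natural number d ≥ 1 and every 0 < ε < 1 there exists a constant C > 0 (depending only on d and ε) such that the following holds. Let U be a finite type with |U| ≥ 2, let f : Finset U → ℝ be a submodular set function, let c : U → ℝ^d with 0 ≤ c_r(i) ≤ ε³·L_r for all i and r, let L ∈ ℝ^d with L_r > 0, and let x ∈ [0,1]^U satisfy Σ_{i∈U} x_i · c_r(i) ≤ L_r for all r. Then there exists x' ∈ [0,1]^U with at most C·ln|U| fractional entries such that Σ_{i∈U} x'_i · c_r(i) ≤ (1+ε)²·L_r for all r and F(x') ≥ F(x), where F is the extension by expectation of f. -/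
open scoped Classical

/-!
Pipage rounding: submodularity makes the multilinear extension `F` convex along every direction
`eᵢ - eⱼ`, so two fractional entries can trade mass, keeping their sum, until one of them is
integral, without decreasing `F`. Trading only within classes of elements of similar cost leaves one
fractional entry per class. The class of an element records, on the scale `ε³ (1 + ε)⁻ᵏ`, the least
level `k ≤ K = O(log |U|)` of its normalised costs `c i r / L r` and the offsets of its other levels
from it, capped at a constant `W`. Within a class the costs in each coordinate agree up to a factor
`1 + ε`, except at a capped offset, where the cost is negligible against the element's largest
normalised cost, or at level `K`, where all elements together cost at most `ε / 2`.
-/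

open Finset Function

section Multiaffine

variable {U : Type*} [DecidableEq U]

def IsMultiaffine (Φ : (U → ℝ) → ℝ) : Prop :=
  ∀ y k s, Φ (update y k s) = (1 - s) * Φ (update y k 0) + s * Φ (update y k 1)

namespace IsMultiaffine

variable {Φ Ψ : (U → ℝ) → ℝ}

theorem add (hΦ : IsMultiaffine Φ) (hΨ : IsMultiaffine Ψ) : IsMultiaffine (Φ + Ψ) := by
  intro y k s
  simp only [Pi.add_apply, hΦ y k s, hΨ y k s]
  ring

theorem sub (hΦ : IsMultiaffine Φ) (hΨ : IsMultiaffine Ψ) : IsMultiaffine (Φ - Ψ) := by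
  intro y k s
  simp only [Pi.sub_apply, hΦ y k s, hΨ y k s]
  ring

theorem comp_update (hΦ : IsMultiaffine Φ) (i : U) (a : ℝ) :
    IsMultiaffine fun y => Φ (update y i a) := by
  intro y k s
  rcases eq_or_ne k i with rfl | hki
  · simp only [update_idem]
    ring
  · simp only [update_comm hki]
    exact hΦ _ k s

theorem apply_update_update (hΦ : IsMultiaffine Φ) (i j : U) (y : U → ℝ)
    (a b : ℝ) :
    Φ (update (update y i a) j b) =
      (1 - a) * (1 - b) * Φ (update (update y i 0) j 0) +
        (1 - a) * b * Φ (update (update y i 0) j 1) +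
        a * (1 - b) * Φ (update (update y i 1) j 0) +
        a * b * Φ (update (update y i 1) j 1) := by
  have h0 := hΦ.comp_update j 0 y i a
  have h1 := hΦ.comp_update j 1 y i a
  beta_reduce at h0 h1
  rw [hΦ _ j b, h0, h1]
  ring

theorem nonneg_of_vertices [Fintype U] (hΦ : IsMultiaffine Φ)
    (hvert : ∀ z : U → ℝ, (∀ k, z k = 0 ∨ z k = 1) → 0 ≤ Φ z)
    {y : U → ℝ} (hy : ∀ k, 0 ≤ y k ∧ y k ≤ 1) : 0 ≤ Φ y := by
  suffices ∀ S : Finset U, ∀ y : U → ℝ, (∀ k, 0 ≤ y k ∧ y k ≤ 1) →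
      (∀ k ∉ S, y k = 0 ∨ y k = 1) → 0 ≤ Φ y from
    this univ y hy fun k hk => absurd (mem_univ k) hk
  intro S
  induction S using Finset.induction_on with
  | empty => exact fun y _ hy => hvert y fun k => hy k (notMem_empty k)
  | insert k S _ ih =>
    intro y hy hout
    have hvertex (v : ℝ) (hv : v = 0 ∨ v = 1) : 0 ≤ Φ (update y k v) := by
      refine ih _ (fun l => ?_) (fun l hl => ?_)
      · rcases eq_or_ne l k with rfl | hlk
        · rcases hv with rfl | rfl <;> simp
        · simpa [hlk] using hy l
      · rcases eq_or_ne l k with rfl | hlk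
        · simpa using hv
        · simpa [hlk] using hout l (by simp [hlk, hl])
    rw [← update_eq_self k y, hΦ]
    have := hvertex 0 (.inl rfl)
    have := hvertex 1 (.inr rfl)
    have := hy k
    nlinarith

end IsMultiaffine

end Multiaffine

section Pipage

variable {U : Type*}

noncomputable def fractionalEntries [Fintype U] (y : U → ℝ) : Finset U := {i | 0 < y i ∧ y i < 1}

@[simp]
theorem mem_fractionalEntries [Fintype U] {y : U → ℝ} {i : U} :
    i ∈ fractionalEntries y ↔ 0 < y i ∧ y i < 1 := by
  simp [fractionalEntries]

variable [DecidableEq U]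

def pipageMove (y : U → ℝ) (i j : U) (t : ℝ) : U → ℝ :=
  update (update y i (y i + t)) j (y j - t)

theorem pipageMove_eq_add_sub {i j : U} (hij : i ≠ j) (y : U → ℝ) (t : ℝ) :
    pipageMove y i j t = y + Pi.single i t - Pi.single j t := by
  ext k
  simp only [pipageMove, update_apply, Pi.add_apply, Pi.sub_apply, Pi.single_apply]
  split_ifs <;> simp_all

theorem sum_pipageMove {i j : U} (hij : i ≠ j) (y : U → ℝ) (t : ℝ) {s : Finset U}
    (hs : i ∈ s ↔ j ∈ s) : ∑ k ∈ s, pipageMove y i j t k = ∑ k ∈ s, y k := by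
  simp only [pipageMove_eq_add_sub hij, Pi.add_apply, Pi.sub_apply, sum_sub_distrib,
    sum_add_distrib, sum_pi_single', hs]
  ring

theorem pipageMove_mem_cube {y : U → ℝ} (hy : ∀ k, 0 ≤ y k ∧ y k ≤ 1) {i j : U}
    {t : ℝ} (ht₁ : -min (y i) (1 - y j) ≤ t) (ht₂ : t ≤ min (1 - y i) (y j)) (k : U) :
    0 ≤ pipageMove y i j t k ∧ pipageMove y i j t k ≤ 1 := by
  have := min_le_left (y i) (1 - y j)
  have := min_le_right (y i) (1 - y j)
  have := min_le_left (1 - y i) (y j)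
  have := min_le_right (1 - y i) (y j)
  simp only [pipageMove, update_apply]
  split_ifs with hkj hki
  · constructor <;> linarith
  · constructor <;> linarith
  · exact hy k

end Pipage

theorem nonneg_or_nonneg_of_convex_quadratic {β B t₁ t₂ : ℝ} (hB : 0 ≤ B) (h₁ : t₁ ≤ 0)
    (h₂ : 0 ≤ t₂) : 0 ≤ β * t₁ + B * t₁ ^ 2 ∨ 0 ≤ β * t₂ + B * t₂ ^ 2 := by
  by_contra! h
  rcases h₂.eq_or_lt with rfl | ht₂
  · simp at h
  -- for `g t = β * t + B * t ^ 2`, `t₂ * g t₁ - t₁ * g t₂ = B * t₁ * t₂ * (t₁ - t₂)`: the left side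
  -- is negative, the right side nonnegative
  nlinarith [mul_neg_of_pos_of_neg ht₂ h.1, mul_nonpos_of_nonneg_of_nonpos (neg_nonneg.2 h₁) h.2.le,
    mul_nonneg (mul_nonneg hB (mul_nonneg (neg_nonneg.2 h₁) h₂)) (sub_nonneg.2 (h₁.trans h₂))]

section MultilinearExtension

variable {U : Type*} [Fintype U] [DecidableEq U]

theorem isMultiaffine_mulExt (f : Finset U → ℝ) : IsMultiaffine (mulExt f) := by
  intro y k s
  unfold mulExt
  rw [mul_sum, mul_sum, ← sum_add_distrib]
  refine sum_congr rfl fun R _ => ?_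
  by_cases hk : k ∈ R
  · have hkc (v : ℝ) : ∏ l ∈ Rᶜ, (1 - update y k v l) = ∏ l ∈ Rᶜ, (1 - y l) :=
      prod_congr rfl fun l hl => by rw [update_of_ne (by rintro rfl; simp_all)]
    simp only [prod_update_of_mem hk, hkc]
    ring
  · have hkc : k ∈ Rᶜ := by simpa using hk
    have hsub (v : ℝ) : ∏ l ∈ Rᶜ, (1 - update y k v l) = (1 - v) * ∏ l ∈ Rᶜ \ {k}, (1 - y l) := by
      rw [← prod_update_of_mem hkc (fun l => 1 - y l)]
      exact prod_congr rfl fun l _ => by rcases eq_or_ne l k with rfl | h <;> simp [*]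
    simp only [prod_update_of_notMem hk, hsub]
    ring

theorem mulExt_eq_of_forall_eq_zero_or_eq_one (f : Finset U → ℝ) {z : U → ℝ}
    (hz : ∀ k, z k = 0 ∨ z k = 1) :
    mulExt f z = f {k | z k = 1} := by
  unfold mulExt
  rw [Fintype.sum_eq_single ({k | z k = 1} : Finset U)]
  · rw [prod_eq_one, prod_eq_one, mul_one, mul_one]
    · intro k hk
      simpa using (hz k).resolve_right (by simpa using hk)
    · intro k hk
      simpa using hk
  · intro R hR
    obtain ⟨k, hk⟩ : ∃ k, ¬(k ∈ R ↔ z k = 1) := by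
      by_contra! h
      exact hR (by ext k; simpa using h k)
    rcases hz k with h0 | h1
    · rw [prod_eq_zero (s := R) (i := k) (by simp_all) h0]; ring
    · rw [prod_eq_zero (s := Rᶜ) (i := k) (by simp_all) (by simp [h1])]; ring

variable {f : Finset U → ℝ}

theorem mulExt_update_update_add_le
    (hf : ∀ S T : Finset U, f (S ∪ T) + f (S ∩ T) ≤ f S + f T) (i j : U) {y : U → ℝ}
    (hy : ∀ k, 0 ≤ y k ∧ y k ≤ 1) :
    mulExt f (update (update y i 1) j 1) + mulExt f (update (update y i 0) j 0) ≤
      mulExt f (update (update y i 1) j 0) + mulExt f (update (update y i 0) j 1) := by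
  have hF (a b : ℝ) : IsMultiaffine fun y => mulExt f (update (update y i a) j b) :=
    ((isMultiaffine_mulExt f).comp_update j b).comp_update i a
  have hΦ := ((hF 1 0).add (hF 0 1)).sub ((hF 1 1).add (hF 0 0))
  refine sub_nonneg.mp (hΦ.nonneg_of_vertices (fun z hz => ?_) hy)
  have hvertex (a b : ℝ) (ha : a = 0 ∨ a = 1) (hb : b = 0 ∨ b = 1) :
      mulExt f (update (update z i a) j b) = f {k | update (update z i a) j b k = 1} := by
    refine mulExt_eq_of_forall_eq_zero_or_eq_one f fun k => ?_
    simp only [update_apply]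
    split_ifs <;> simp_all
  simp only [Pi.add_apply, Pi.sub_apply, hvertex 1 0 (.inr rfl) (.inl rfl),
    hvertex 0 1 (.inl rfl) (.inr rfl), hvertex 1 1 (.inr rfl) (.inr rfl),
    hvertex 0 0 (.inl rfl) (.inl rfl), sub_nonneg]
  -- at a vertex the corners `(1, 1)` and `(0, 0)` give the union and the intersection of the
  -- sets of the corners `(1, 0)` and `(0, 1)`
  convert hf {k | update (update z i 1) j 0 k = 1} {k | update (update z i 0) j 1 k = 1} using 3 <;>
  · ext k
    simp only [mem_filter, mem_univ, true_and, mem_union, mem_inter, update_apply]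
    split_ifs <;> simp_all

theorem mulExt_le_or_le_pipageMove
    (hf : ∀ S T : Finset U, f (S ∪ T) + f (S ∩ T) ≤ f S + f T) {y : U → ℝ}
    (hy : ∀ k, 0 ≤ y k ∧ y k ≤ 1) (i j : U) {t₁ t₂ : ℝ} (h₁ : t₁ ≤ 0) (h₂ : 0 ≤ t₂) :
    mulExt f y ≤ mulExt f (pipageMove y i j t₁) ∨ mulExt f y ≤ mulExt f (pipageMove y i j t₂) := by
  set F : ℝ → ℝ → ℝ := fun a b => mulExt f (update (update y i a) j b)
  set B := F 1 0 + F 0 1 - F 1 1 - F 0 0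
  have hB : 0 ≤ B := by linarith [mulExt_update_update_add_le hf i j hy]
  have hexp (a b : ℝ) : F a b = (1 - a) * (1 - b) * F 0 0 + (1 - a) * b * F 0 1 +
      a * (1 - b) * F 1 0 + a * b * F 1 1 :=
    (isMultiaffine_mulExt f).apply_update_update i j y a b
  have hmove (t : ℝ) : mulExt f (pipageMove y i j t) - mulExt f y =
      (F 1 0 - F 0 1 + (y i - y j) * B) * t + B * t ^ 2 := by
    have hy0 : mulExt f y = F (y i) (y j) := by simp only [F, update_eq_self]
    rw [pipageMove, hy0]
    change F _ _ - _ = _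
    rw [hexp (y i + t), hexp (y i)]
    ring
  rcases nonneg_or_nonneg_of_convex_quadratic (β := F 1 0 - F 0 1 + (y i - y j) * B) hB h₁ h₂
    with h | h
  · exact .inl (sub_nonneg.mp ((hmove t₁).symm ▸ h))
  · exact .inr (sub_nonneg.mp ((hmove t₂).symm ▸ h))

theorem fractionalEntries_pipageMove_ssubset {y : U → ℝ} {i j : U}
    (hi : i ∈ fractionalEntries y) (hj : j ∈ fractionalEntries y) {t : ℝ} {w : U}
    (hw : w = i ∨ w = j) (hw' : pipageMove y i j t w = 0 ∨ pipageMove y i j t w = 1) :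
    fractionalEntries (pipageMove y i j t) ⊂ fractionalEntries y := by
  have hsub : fractionalEntries (pipageMove y i j t) ⊆ fractionalEntries y := by
    intro k hk
    by_cases hkij : k = i ∨ k = j
    · rcases hkij with rfl | rfl <;> assumption
    · rw [not_or] at hkij
      simpa [pipageMove, update_of_ne hkij.1, update_of_ne hkij.2] using hk
  refine (ssubset_iff_of_subset hsub).2 ⟨w, by rcases hw with rfl | rfl <;> assumption, ?_⟩
  rcases hw' with h | h <;> simp [h]

theorem exists_pipage_step
    (hf : ∀ S T : Finset U, f (S ∪ T) + f (S ∩ T) ≤ f S + f T) {y : U → ℝ}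
    (hy : ∀ k, 0 ≤ y k ∧ y k ≤ 1) {i j : U} (hij : i ≠ j) (hi : i ∈ fractionalEntries y)
    (hj : j ∈ fractionalEntries y) :
    ∃ t, (∀ k, 0 ≤ pipageMove y i j t k ∧ pipageMove y i j t k ≤ 1) ∧
      fractionalEntries (pipageMove y i j t) ⊂ fractionalEntries y ∧
      mulExt f y ≤ mulExt f (pipageMove y i j t) := by
  have hyi := mem_fractionalEntries.1 hi
  have hyj := mem_fractionalEntries.1 hj
  have hi_eq (t : ℝ) : pipageMove y i j t i = y i + t := by simp [pipageMove, hij]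
  have hj_eq (t : ℝ) : pipageMove y i j t j = y j - t := by simp [pipageMove]
  set t₁ := -min (y i) (1 - y j)
  set t₂ := min (1 - y i) (y j)
  have ht₁ : t₁ ≤ 0 := neg_nonpos.2 (le_min hyi.1.le (by linarith))
  have ht₂ : 0 ≤ t₂ := le_min (by linarith) hyj.1.le
  rcases mulExt_le_or_le_pipageMove hf hy i j ht₁ ht₂ with h | h
  · refine ⟨t₁, pipageMove_mem_cube hy le_rfl (ht₁.trans ht₂), ?_, h⟩
    rcases min_choice (y i) (1 - y j) with hm | hm
    · exact fractionalEntries_pipageMove_ssubset hi hj (.inl rfl) (.inl (by simp [hi_eq, t₁, hm]))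
    · exact fractionalEntries_pipageMove_ssubset hi hj (.inr rfl) (.inr (by simp [hj_eq, t₁, hm]))
  · refine ⟨t₂, pipageMove_mem_cube hy (ht₁.trans ht₂) le_rfl, ?_, h⟩
    rcases min_choice (1 - y i) (y j) with hm | hm
    · exact fractionalEntries_pipageMove_ssubset hi hj (.inl rfl) (.inr (by simp [hi_eq, t₂, hm]))
    · exact fractionalEntries_pipageMove_ssubset hi hj (.inr rfl) (.inl (by simp [hj_eq, t₂, hm]))

theorem exists_mulExt_le_injOn_fractionalEntries {Λ : Type*} [DecidableEq Λ]
    (hf : ∀ S T : Finset U, f (S ∪ T) + f (S ∩ T) ≤ f S + f T) (κ : U → Λ) {y : U → ℝ}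
    (hy : ∀ k, 0 ≤ y k ∧ y k ≤ 1) :
    ∃ y' : U → ℝ, (∀ k, 0 ≤ y' k ∧ y' k ≤ 1) ∧
      (∀ τ, ∑ k with κ k = τ, y' k = ∑ k with κ k = τ, y k) ∧
      mulExt f y ≤ mulExt f y' ∧ Set.InjOn κ (fractionalEntries y') := by
  induction h : #(fractionalEntries y) using Nat.strong_induction_on generalizing y with
  | _ n ih =>
    by_cases hmerge : ∃ i ∈ fractionalEntries y, ∃ j ∈ fractionalEntries y, i ≠ j ∧ κ i = κ j
    · obtain ⟨i, hi, j, hj, hij, hκ⟩ := hmerge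
      obtain ⟨t, hcube, hfrac, hle⟩ := exists_pipage_step hf hy hij hi hj
      obtain ⟨y', hy', hsum, hle', hinj⟩ := ih _ (h ▸ card_lt_card hfrac) hcube rfl
      refine ⟨y', hy', fun τ => ?_, hle.trans hle', hinj⟩
      rw [hsum, sum_pipageMove hij]
      simp [hκ]
    · push Not at hmerge
      exact ⟨y, hy, fun _ => rfl, le_rfl, fun i hi j hj => not_imp_not.1 (hmerge i hi j hj)⟩

end MultilinearExtension

section LevelClasses

/-- The least `k < N` with `A < t * q ^ (k + 1)`, or `N` if there is none: for `0 ≤ t ≤ A` and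
`k < N` this puts `t` in `(A / q ^ (k + 1), A / q ^ k]`. -/
noncomputable def cappedLevel (q A : ℝ) (N : ℕ) (t : ℝ) : ℕ :=
  Nat.find (p := fun k => k = N ∨ A < t * q ^ (k + 1)) ⟨N, .inl rfl⟩

variable {q A t : ℝ} {N : ℕ}

theorem cappedLevel_le : cappedLevel q A N t ≤ N :=
  Nat.find_min' _ (.inl rfl)

theorem lt_mul_pow_cappedLevel_succ (h : cappedLevel q A N t < N) :
    A < t * q ^ (cappedLevel q A N t + 1) :=
  (Nat.find_spec (p := fun k => k = N ∨ A < t * q ^ (k + 1)) _).resolve_left h.ne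

theorem mul_pow_cappedLevel_le (ht : t ≤ A) : t * q ^ cappedLevel q A N t ≤ A := by
  rcases h : cappedLevel q A N t with _ | k
  · simpa using ht
  · have := Nat.find_min (p := fun k => k = N ∨ A < t * q ^ (k + 1)) ⟨N, .inl rfl⟩ (m := k)
      (by unfold cappedLevel at h; omega)
    push Not at this
    exact this.2

theorem le_div_pow_of_le_cappedLevel (hq : 1 ≤ q) (ht₀ : 0 ≤ t) (ht : t ≤ A) {k : ℕ}
    (hk : k ≤ cappedLevel q A N t) : t ≤ A / q ^ k := by
  rw [le_div_iff₀ (by positivity)]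
  exact (mul_le_mul_of_nonneg_left (pow_le_pow_right₀ hq hk) ht₀).trans (mul_pow_cappedLevel_le ht)

variable {U ι : Type*}

noncomputable def levelClass (ℓ : U → ι → ℕ) (W : ℕ) (i : U) : ℕ × (ι → ℕ) :=
  (⨅ r, ℓ i r, fun r => min (ℓ i r - ⨅ s, ℓ i s) W)

theorem eq_or_le_of_levelClass_eq {ℓ : U → ι → ℕ} {W : ℕ} {i j : U}
    (h : levelClass ℓ W i = levelClass ℓ W j) (r : ι) :
    ℓ i r = ℓ j r ∨ (⨅ s, ℓ j s) + W ≤ ℓ i r := by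
  simp only [levelClass, Prod.mk.injEq, funext_iff] at h
  have := h.2 r
  have hi : ⨅ s, ℓ i s ≤ ℓ i r := ciInf_le (OrderBot.bddBelow _) r
  have hj : ⨅ s, ℓ j s ≤ ℓ j r := ciInf_le (OrderBot.bddBelow _) r
  omega

theorem levelClass_mem [Fintype ι] [DecidableEq ι] {ℓ : U → ι → ℕ} {K : ℕ}
    (hℓ : ∀ i r, ℓ i r ≤ K) (W : ℕ) (i : U) :
    levelClass ℓ W i ∈ range (K + 1) ×ˢ Fintype.piFinset fun _ : ι => range (W + 1) := by
  have hmin : ⨅ r, ℓ i r ≤ K := by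
    rcases isEmpty_or_nonempty ι with hι | ⟨⟨r⟩⟩
    · simp [Nat.iInf_of_empty]
    · exact (ciInf_le (OrderBot.bddBelow _) r : ⨅ s, ℓ i s ≤ ℓ i r).trans (hℓ i r)
  simp only [levelClass, mem_product, mem_range, Fintype.mem_piFinset]
  exact ⟨by omega, fun r => by omega⟩

end LevelClasses

section Budgets

variable {U ι : Type*}

theorem sum_mul_le_of_sum_fiber_eq [Fintype U] {Λ : Type*} [DecidableEq Λ] (κ : U → Λ)
    {x x' c g : U → ℝ} (hx : ∀ i, 0 ≤ x i) (hx' : ∀ i, 0 ≤ x' i)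
    (hsum : ∀ τ, ∑ i with κ i = τ, x' i = ∑ i with κ i = τ, x i)
    (hcg : ∀ i j, κ i = κ j → c i ≤ g j) :
    ∑ i, x' i * c i ≤ ∑ i, x i * g i := by
  have hmaps : ∀ i ∈ univ, κ i ∈ univ.image κ := fun i _ => mem_image_of_mem κ (mem_univ i)
  rw [← sum_fiberwise_of_maps_to hmaps, ← sum_fiberwise_of_maps_to hmaps]
  refine sum_le_sum fun τ _ => ?_
  rcases eq_empty_or_nonempty {i | κ i = τ} with hτ | hτ
  · simp [hτ]
  obtain ⟨i₀, hi₀, hmax⟩ := exists_max_image _ c hτ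
  have hκ {i} (hi : i ∈ ({i | κ i = τ} : Finset U)) : κ i = τ := (mem_filter.1 hi).2
  calc ∑ i with κ i = τ, x' i * c i
      ≤ ∑ i with κ i = τ, x' i * c i₀ := sum_le_sum fun i hi => by gcongr; exacts [hx' i, hmax i hi]
    _ = ∑ i with κ i = τ, x i * c i₀ := by rw [← sum_mul, ← sum_mul, hsum]
    _ ≤ ∑ i with κ i = τ, x i * g i :=
      sum_le_sum fun i hi => by gcongr; exacts [hx i, hcg i₀ i ((hκ hi₀).trans (hκ hi).symm)]

variable {q A : ℝ} {K W : ℕ} {a : U → ι → ℝ}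

local notation "κ" => levelClass (fun i r => cappedLevel q A K (a i r)) W

theorem le_of_levelClass_eq (hq : 1 ≤ q) (ha : ∀ i r, 0 ≤ a i r ∧ a i r ≤ A) {i j : U}
    (h : κ i = κ j) (r : ι) :
    a i r ≤ q * a j r + A / q ^ min ((⨅ s, cappedLevel q A K (a j s)) + W) K := by
  have hE : 0 ≤ A / q ^ min ((⨅ s, cappedLevel q A K (a j s)) + W) K :=
    div_nonneg ((ha i r).1.trans (ha i r).2) (by positivity)
  have herr (hk : min ((⨅ s, cappedLevel q A K (a j s)) + W) K ≤ cappedLevel q A K (a i r)) :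
      a i r ≤ q * a j r + A / q ^ min ((⨅ s, cappedLevel q A K (a j s)) + W) K :=
    le_add_of_nonneg_of_le (mul_nonneg (by linarith) (ha j r).1)
      (le_div_pow_of_le_cappedLevel hq (ha i r).1 (ha i r).2 hk)
  rcases eq_or_le_of_levelClass_eq h r with hij | hle
  · rcases cappedLevel_le.lt_or_eq (a := cappedLevel q A K (a j r)) with hlt | heq
    · -- same level below the cap: `a i r * q ^ ℓ ≤ A < a j r * q ^ (ℓ + 1)`
      refine le_add_of_le_of_nonneg ?_ hE
      have h₁ := mul_pow_cappedLevel_le (q := q) (N := K) (ha i r).2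
      have h₂ := lt_mul_pow_cappedLevel_succ hlt
      rw [hij] at h₁
      rw [pow_succ] at h₂
      have : 0 < q ^ cappedLevel q A K (a j r) := by positivity
      by_contra! hc
      nlinarith [mul_le_mul_of_nonneg_right hc.le this.le]
    · exact herr (by omega)
  · exact herr (by omega)

theorem div_pow_min_le [Nonempty ι] [Fintype ι] (hq : 1 < q) (hA : 0 ≤ A)
    (ha : ∀ i r, 0 ≤ a i r) (i : U) :
    A / q ^ min ((⨅ s, cappedLevel q A K (a i s)) + W) K ≤ A / q ^ K + q / q ^ W * ∑ r, a i r := by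
  obtain ⟨r, hr⟩ := ciInf_mem fun s => cappedLevel q A K (a i s)
  have hsum : q / q ^ W * a i r ≤ q / q ^ W * ∑ s, a i s :=
    mul_le_mul_of_nonneg_left (single_le_sum (fun s _ => ha i s) (mem_univ r)) (by positivity)
  rcases le_or_gt K ((⨅ s, cappedLevel q A K (a i s)) + W) with hK | hK
  · rw [min_eq_right hK]
    exact le_add_of_nonneg_right (hsum.trans' (by have := ha i r; positivity))
  · rw [min_eq_left hK.le]
    refine le_add_of_nonneg_of_le (by positivity) (hsum.trans' ?_)
    -- the minimal level lies below the cap, so `A < a i r * q ^ (ℓ + 1)` there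
    have hA' := lt_mul_pow_cappedLevel_succ (q := q) (A := A) (N := K) (t := a i r)
      (by simp only at hr; omega)
    simp only at hr
    rw [hr] at hA'
    calc A / q ^ ((⨅ s, cappedLevel q A K (a i s)) + W)
        ≤ a i r * q ^ ((⨅ s, cappedLevel q A K (a i s)) + 1) /
            q ^ ((⨅ s, cappedLevel q A K (a i s)) + W) := by gcongr
      _ = q / q ^ W * a i r := by
        rw [pow_succ, pow_add]
        field_simp

theorem sum_mul_le_of_sum_levelClass_eq [Fintype U] [Fintype ι] [DecidableEq ι] (hq : 1 < q)
    (hA : 0 ≤ A) (ha : ∀ i r, 0 ≤ a i r ∧ a i r ≤ A) {x x' : U → ℝ}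
    (hx : ∀ i, 0 ≤ x i ∧ x i ≤ 1) (hx' : ∀ i, 0 ≤ x' i)
    (hsum : ∀ τ, ∑ i with κ i = τ, x' i = ∑ i with κ i = τ, x i)
    (hbudget : ∀ r, ∑ i, x i * a i r ≤ 1) (r : ι) :
    ∑ i, x' i * a i r ≤ q + Fintype.card U * (A / q ^ K) + q / q ^ W * Fintype.card ι := by
  have : Nonempty ι := ⟨r⟩
  calc ∑ i, x' i * a i r
      ≤ ∑ i, x i * (q * a i r + A / q ^ min ((⨅ s, cappedLevel q A K (a i s)) + W) K) :=
        sum_mul_le_of_sum_fiber_eq κ (fun i => (hx i).1) hx' hsum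
          fun i j h => le_of_levelClass_eq hq.le ha h r
    _ ≤ ∑ i, x i * (q * a i r + (A / q ^ K + q / q ^ W * ∑ s, a i s)) := by
        gcongr with i
        · exact (hx i).1
        · exact div_pow_min_le hq hA (fun i r => (ha i r).1) i
    _ = ∑ i, (q * (x i * a i r) + A / q ^ K * x i + q / q ^ W * ∑ s, x i * a i s) :=
        sum_congr rfl fun i _ => by rw [← mul_sum]; ring
    _ = q * ∑ i, x i * a i r + A / q ^ K * ∑ i, x i + q / q ^ W * ∑ s, ∑ i, x i * a i s := by
        rw [sum_comm (s := univ) (t := univ)]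
        simp only [sum_add_distrib, mul_sum]
    _ ≤ q * 1 + A / q ^ K * Fintype.card U + q / q ^ W * ∑ _s : ι, 1 := by
        gcongr
        · exact hbudget r
        · simpa using sum_le_sum fun i (_ : i ∈ univ) => (hx i).2
        · exact hbudget _
    _ = q + Fintype.card U * (A / q ^ K) + q / q ^ W * Fintype.card ι := by simp; ring

end Budgets

theorem exists_pow_ge_mul_and_le_mul_log {q : ℝ} (hq : 1 < q) (B : ℝ) :
    ∃ C > 0, ∀ n : ℕ, 2 ≤ n → ∃ K : ℕ, B * n ≤ q ^ K ∧ (K + 1 : ℝ) ≤ C * Real.log n := by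
  obtain ⟨K₀, hK₀⟩ := pow_unbounded_of_one_lt B hq
  have hlogq : 0 < Real.log q := Real.log_pos hq
  refine ⟨(K₀ + 2) / Real.log 2 + 1 / Real.log q, by positivity, fun n hn => ?_⟩
  have hn₁ : (1 : ℝ) ≤ n := by norm_cast; omega
  have hlog2 : Real.log 2 ≤ Real.log n := Real.log_le_log (by norm_num) (by exact_mod_cast hn)
  set K₁ := ⌈Real.logb q n⌉₊
  have hnK₁ : (n : ℝ) ≤ q ^ K₁ := by
    rw [← Real.rpow_natCast]
    exact (Real.logb_le_iff_le_rpow hq (by positivity)).1 (Nat.le_ceil _)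
  have hK₁ : (K₁ : ℝ) < Real.log n / Real.log q + 1 := by
    rw [Real.log_div_log]
    exact Nat.ceil_lt_add_one (Real.logb_nonneg hq hn₁)
  refine ⟨K₀ + K₁, ?_, ?_⟩
  · rw [pow_add]
    exact (mul_le_mul_of_nonneg_right hK₀.le n.cast_nonneg).trans
      (mul_le_mul_of_nonneg_left hnK₁ (by positivity))
  · have h2 : (1 : ℝ) ≤ Real.log n / Real.log 2 := by
      rw [one_le_div (Real.log_pos one_lt_two)]; exact hlog2
    have hK₀' : (0 : ℝ) ≤ K₀ := by positivity
    calc ((K₀ + K₁ : ℕ) + 1 : ℝ)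
        ≤ (K₀ + 2) * (Real.log n / Real.log 2) + Real.log n / Real.log q := by
          push_cast; nlinarith
      _ = _ := by ring

theorem add_card_mul_div_pow_add_le_sq {ε : ℝ} (hε : 0 < ε) {n d K W : ℕ}
    (hK : 2 * ε ^ 2 * n ≤ (1 + ε) ^ K) (hW : 2 * d / ε < (1 + ε) ^ W) :
    1 + ε + n * (ε ^ 3 / (1 + ε) ^ K) + (1 + ε) / (1 + ε) ^ W * d ≤ (1 + ε) ^ 2 := by
  have hKpos : (0 : ℝ) < (1 + ε) ^ K := by positivity
  have hWpos : (0 : ℝ) < (1 + ε) ^ W := by positivity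
  have h₁ : n * (ε ^ 3 / (1 + ε) ^ K) ≤ ε / 2 := by
    rw [mul_div_assoc', div_le_iff₀ hKpos]
    nlinarith
  have h₂ : (1 + ε) / (1 + ε) ^ W * d ≤ (1 + ε) * (ε / 2) := by
    rw [div_lt_iff₀ hε] at hW
    rw [div_mul_eq_mul_div, div_le_iff₀ hWpos]
    nlinarith
  nlinarith

theorem reduce_to_logarithmically_many_fractional_entries_general
    (d : ℕ) (ε : ℝ) (hε : 0 < ε) :
    ∃ C : ℝ, 0 < C ∧
      ∀ (U : Type) [Fintype U] [DecidableEq U],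
        2 ≤ Fintype.card U →
      ∀ (f : Finset U → ℝ),
        (∀ S T : Finset U, f (S ∪ T) + f (S ∩ T) ≤ f S + f T) →
      ∀ (c : U → Fin d → ℝ) (L : Fin d → ℝ), (∀ r, 0 < L r) →
        (∀ (i : U) (r : Fin d), 0 ≤ c i r ∧ c i r ≤ ε ^ 3 * L r) →
      ∀ (x : U → ℝ), (∀ i, 0 ≤ x i ∧ x i ≤ 1) →
        (∀ r, ∑ i : U, x i * c i r ≤ L r) →
        ∃ x' : U → ℝ, (∀ i, 0 ≤ x' i ∧ x' i ≤ 1) ∧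
          ((Finset.univ.filter fun i : U => 0 < x' i ∧ x' i < 1).card : ℝ)
            ≤ C * Real.log (Fintype.card U) ∧
          (∀ r, ∑ i : U, x' i * c i r ≤ (1 + ε) ^ 2 * L r) ∧
          mulExt f x ≤ mulExt f x' := by
  set q := 1 + ε
  have hq : 1 < q := by linarith
  obtain ⟨W, hW⟩ := pow_unbounded_of_one_lt (2 * d / ε) hq
  obtain ⟨C, hC, hK⟩ := exists_pow_ge_mul_and_le_mul_log hq (2 * ε ^ 2)
  refine ⟨C * (W + 1) ^ d, by positivity, fun U _ _ hU f hf c L hL hc x hx hbudget => ?_⟩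
  obtain ⟨K, hqK, hKlog⟩ := hK (Fintype.card U) hU
  set a : U → Fin d → ℝ := fun i r => c i r / L r
  have ha (i r) : 0 ≤ a i r ∧ a i r ≤ ε ^ 3 :=
    ⟨div_nonneg (hc i r).1 (hL r).le, div_le_of_le_mul₀ (hL r).le (by positivity) (hc i r).2⟩
  have hnorm (z : U → ℝ) (r : Fin d) : ∑ i, z i * a i r = (∑ i, z i * c i r) / L r := by
    simp only [a, sum_div, mul_div_assoc]
  obtain ⟨x', hx', hsum, hF, hinj⟩ := exists_mulExt_le_injOn_fractionalEntries hf
    (levelClass (fun i r => cappedLevel q (ε ^ 3) K (a i r)) W) hx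
  refine ⟨x', hx', ?_, fun r => ?_, hF⟩
  · have hcard := card_le_card_of_injOn _
      (fun i _ => levelClass_mem (fun _ _ => cappedLevel_le) W i) hinj
    calc (#(fractionalEntries x') : ℝ) ≤ (K + 1) * (W + 1) ^ d := by
          exact_mod_cast hcard.trans (by simp)
      _ ≤ C * Real.log (Fintype.card U) * (W + 1) ^ d := by gcongr
      _ = _ := by ring
  · have h := sum_mul_le_of_sum_levelClass_eq hq (by positivity) ha hx (fun i => (hx' i).1) hsum
      (fun r => by rw [hnorm, div_le_one (hL r)]; exact hbudget r) r
    rw [hnorm, div_le_iff₀ (hL r)] at h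
    refine h.trans (mul_le_mul_of_nonneg_right ?_ (hL r).le)
    rw [Fintype.card_fin]
    exact add_card_mul_div_pow_add_le_sq hε hqK hW

theorem reduce_to_logarithmically_many_fractional_entries
    (d : ℕ) (hd : 1 ≤ d) (ε : ℝ) (hε : 0 < ε) (hε1 : ε < 1) :
    ∃ C : ℝ, 0 < C ∧
      ∀ (U : Type) [Fintype U] [DecidableEq U],
        2 ≤ Fintype.card U →
      ∀ (f : Finset U → ℝ),
        (∀ S T : Finset U, f (S ∪ T) + f (S ∩ T) ≤ f S + f T) →
      ∀ (c : U → Fin d → ℝ) (L : Fin d → ℝ), (∀ r, 0 < L r) →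
        (∀ (i : U) (r : Fin d), 0 ≤ c i r ∧ c i r ≤ ε ^ 3 * L r) →
      ∀ (x : U → ℝ), (∀ i, 0 ≤ x i ∧ x i ≤ 1) →
        (∀ r, ∑ i : U, x i * c i r ≤ L r) →
        ∃ x' : U → ℝ, (∀ i, 0 ≤ x' i ∧ x' i ≤ 1) ∧
          ((Finset.univ.filter fun i : U => 0 < x' i ∧ x' i < 1).card : ℝ)
            ≤ C * Real.log (Fintype.card U) ∧
          (∀ r, ∑ i : U, x' i * c i r ≤ (1 + ε) ^ 2 * L r) ∧
          mulExt f x ≤ mulExt f x' :=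
  reduce_to_logarithmically_many_fractional_entries_general d ε hε
end

section
/- Let U be a finite type and let f : Finset U → ℝ be a submodular set function with f(∅) ≥ 0. Let O ⊆ U be a finite set, let h ≥ 1 with h ≤ |O|, and let i_1, …, i_h ∈ O be chosen greedily by residual profit: writing K_ℓ = {i_1, …, i_ℓ} (with K_0 = ∅), for each ℓ ∈ {1,…,h} the element i_ℓ maximizes f(K_{ℓ−1} ∪ {i}) − f(K_{ℓ−1}) over all i ∈ O \ K_{ℓ−1}. Then for every j ∈ O \ K_h, f(K_h ∪ {j}) − f(K_h) ≤ f(K_h)/h. -/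
/-!
Submodularity makes the marginal gain of `j` decrease along the chain `K₀ ⊆ ⋯ ⊆ K_h`, so the
gain of `j` at `K_h` is at most its gain at every `K_{ℓ-1}`, which by the greedy choice is at
most the gain `f K_ℓ - f K_{ℓ-1}` of `i_ℓ`. Summing over `ℓ` telescopes to
`h · (f (K_h ∪ {j}) - f K_h) ≤ f K_h - f ∅ ≤ f K_h`.
-/

/-- The set of the first `ℓ` elements of the greedy sequence `a`. -/
def prefixSet {U : Type*} [DecidableEq U] {h : ℕ} (a : Fin h → U) (ℓ : ℕ) :
    Finset U :=
  (Finset.univ.filter fun j : Fin h => (j : ℕ) < ℓ).image a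

open Finset

section PrefixSet

variable {U : Type*} [DecidableEq U] {h : ℕ} (a : Fin h → U)

theorem prefixSet_mono {ℓ m : ℕ} (hlm : ℓ ≤ m) : prefixSet a ℓ ⊆ prefixSet a m :=
  image_subset_image <| monotone_filter_right _ fun _ _ hj => hj.trans_le hlm

theorem prefixSet_zero : prefixSet a 0 = ∅ := by
  simp [prefixSet]

theorem prefixSet_succ (ℓ : Fin h) :
    prefixSet a ((ℓ : ℕ) + 1) = insert (a ℓ) (prefixSet a ℓ) := by
  ext x
  simp only [prefixSet, mem_image, mem_filter, mem_univ, true_and, mem_insert,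
    Nat.lt_succ_iff_lt_or_eq, or_and_right, exists_or, Fin.val_inj, exists_eq_left]
  exact or_comm.trans (or_congr_left eq_comm)

theorem sum_prefixSet_succ_sub {M : Type*} [AddCommGroup M] (f : Finset U → M) :
    ∑ ℓ : Fin h, (f (prefixSet a ((ℓ : ℕ) + 1)) - f (prefixSet a ℓ)) =
      f (prefixSet a h) - f ∅ := by
  rw [Fin.sum_univ_eq_sum_range (fun ℓ => f (prefixSet a (ℓ + 1)) - f (prefixSet a ℓ)),
    sum_range_sub (fun ℓ => f (prefixSet a ℓ)), prefixSet_zero]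

end PrefixSet

theorem marginal_antitone_of_submodular {U M : Type*} [DecidableEq U] [AddCommGroup M]
    [PartialOrder M] [IsOrderedAddMonoid M] {f : Finset U → M}
    (hsub : ∀ S T : Finset U, f (S ∪ T) + f (S ∩ T) ≤ f S + f T)
    {S T : Finset U} (hST : S ⊆ T) {j : U} (hjT : j ∉ T) :
    f (insert j T) - f T ≤ f (insert j S) - f S := by
  have := hsub (insert j S) T
  rw [insert_union, union_eq_right.mpr hST, insert_inter_of_notMem hjT,
    inter_eq_left.mpr hST] at this
  exact sub_le_sub_iff.mpr this

theorem greedy_residual_profit_bound_general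
    {U : Type*} [DecidableEq U] (f : Finset U → ℝ)
    (hsub : ∀ S T : Finset U, f (S ∪ T) + f (S ∩ T) ≤ f S + f T)
    (hempty : 0 ≤ f ∅)
    (O : Finset U) (h : ℕ) (hh : 1 ≤ h)
    (a : Fin h → U)
    (hgreedy : ∀ ℓ : Fin h, ∀ i ∈ O \ prefixSet a ℓ,
      f (insert i (prefixSet a ℓ)) - f (prefixSet a ℓ) ≤
        f (insert (a ℓ) (prefixSet a ℓ)) - f (prefixSet a ℓ)) :
    ∀ j ∈ O \ prefixSet a h,
      f (insert j (prefixSet a h)) - f (prefixSet a h) ≤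
        f (prefixSet a h) / h := by
  intro j hj
  obtain ⟨hjO, hjK⟩ := mem_sdiff.mp hj
  have hstep (ℓ : Fin h) : f (insert j (prefixSet a h)) - f (prefixSet a h) ≤
      f (prefixSet a ((ℓ : ℕ) + 1)) - f (prefixSet a ℓ) := by
    have hℓ : prefixSet a ℓ ⊆ prefixSet a h := prefixSet_mono a ℓ.2.le
    rw [prefixSet_succ]
    exact (marginal_antitone_of_submodular hsub hℓ hjK).trans
      (hgreedy ℓ j (mem_sdiff.mpr ⟨hjO, fun hj => hjK (hℓ hj)⟩))
  have hsum : h * (f (insert j (prefixSet a h)) - f (prefixSet a h)) ≤ f (prefixSet a h) := by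
    calc h * (f (insert j (prefixSet a h)) - f (prefixSet a h))
        = ∑ _ℓ : Fin h, (f (insert j (prefixSet a h)) - f (prefixSet a h)) := by
          rw [sum_const, card_univ, Fintype.card_fin, nsmul_eq_mul]
      _ ≤ ∑ ℓ : Fin h, (f (prefixSet a ((ℓ : ℕ) + 1)) - f (prefixSet a ℓ)) :=
          sum_le_sum fun ℓ _ => hstep ℓ
      _ = f (prefixSet a h) - f ∅ := sum_prefixSet_succ_sub a f
      _ ≤ f (prefixSet a h) := by linarith
  rw [le_div_iff₀ (by exact_mod_cast hh)]
  linarith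

theorem greedy_residual_profit_bound
    {U : Type*} [Fintype U] [DecidableEq U] (f : Finset U → ℝ)
    (hsub : ∀ S T : Finset U, f (S ∪ T) + f (S ∩ T) ≤ f S + f T)
    (hempty : 0 ≤ f ∅)
    (O : Finset U) (h : ℕ) (hh : 1 ≤ h) (hhO : h ≤ O.card)
    (a : Fin h → U) (ha : Function.Injective a)
    (haO : ∀ ℓ : Fin h, a ℓ ∈ O \ prefixSet a ℓ)
    (hgreedy : ∀ ℓ : Fin h, ∀ i ∈ O \ prefixSet a ℓ,
      f (insert i (prefixSet a ℓ)) - f (prefixSet a ℓ) ≤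
        f (insert (a ℓ) (prefixSet a ℓ)) - f (prefixSet a ℓ)) :
    ∀ j ∈ O \ prefixSet a h,
      f (insert j (prefixSet a h)) - f (prefixSet a h) ≤
        f (prefixSet a h) / h :=
  greedy_residual_profit_bound_general f hsub hempty O h hh a hgreedy
end
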